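/- arXiv:1904.02916 — 5 statements merged into one kernel-verified Lean document; each statement's English description precedes it below -/
import Mathlib

section
/- Let f, g, h, h1 be real-valued continuous functions on [t0, ∞), and suppose the Riccati equation y' + f(t)y² + g(t)y + h1(t) = 0 has a real-valued solution y1 on an interval [t1, t2), where t0 ≤ t1 < t2 ≤ +∞. Assume f(t) ≥ 0 and h(t) ≤ h1(t) for all t ∈ [t1, t2). Then for every real number y₀ with y₀ ≥ y1(t1), the Riccati equation y' + f(t)y² + g(t)y + h(t) = 0 has a solution y0 on all of [t1, t2) with y0(t1) = y₀ and y0(t) ≥ y1(t) for all t ∈ [t1, t2). -/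
open Set Real Topology Filter

noncomputable def riccatiF (f g h : ℝ → ℝ) (t x : ℝ) : ℝ := -(f t * x ^ 2 + g t * x + h t)

lemma gronwallBound_mono_x {δ K ε x X : ℝ} (hδ : 0 ≤ δ) (hK : 0 ≤ K) (hε : 0 ≤ ε)
    (hx : 0 ≤ x) (hxX : x ≤ X) : gronwallBound δ K ε x ≤ gronwallBound δ K ε X := by
  by_cases hK0 : K = 0
  · subst hK0
    simp only [gronwallBound_K0]
    nlinarith
  · simp only [gronwallBound_of_K_ne_0 hK0]
    have hKpos : 0 < K := lt_of_le_of_ne hK (Ne.symm hK0)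
    have he : exp (K * x) ≤ exp (K * X) := exp_le_exp.2 (by nlinarith)
    have h1 : (0:ℝ) ≤ ε / K := div_nonneg hε hK
    nlinarith

lemma riccati_local_exists (f g h : ℝ → ℝ) (t1 bmx B : ℝ)
    (hf : ContinuousOn f (Ici t1)) (hg : ContinuousOn g (Ici t1))
    (hh : ContinuousOn h (Ici t1)) (hB : 0 ≤ B) :
    ∃ ε > (0:ℝ), ∀ a ∈ Icc t1 bmx, ∀ x₀ : ℝ, |x₀| ≤ B →
      ∃ y : ℝ → ℝ, y a = x₀ ∧ ∀ t ∈ Icc a (a + ε),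
        HasDerivWithinAt y (riccatiF f g h t (y t)) (Icc a (a + ε)) t := by
  set J : Set ℝ := Icc t1 (max bmx t1 + 1) with hJ
  have hJc : IsCompact J := isCompact_Icc
  have hJsub : J ⊆ Ici t1 := fun x hx => hx.1
  have hJne : t1 ∈ J := ⟨le_rfl, by linarith [le_max_right bmx t1]⟩
  obtain ⟨Mf, hMf⟩ := hJc.exists_bound_of_continuousOn (hf.mono hJsub)
  obtain ⟨Mg, hMg⟩ := hJc.exists_bound_of_continuousOn (hg.mono hJsub)
  obtain ⟨Mh, hMh⟩ := hJc.exists_bound_of_continuousOn (hh.mono hJsub)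
  have hMf0 : 0 ≤ Mf := le_trans (norm_nonneg _) (hMf t1 hJne)
  have hMg0 : 0 ≤ Mg := le_trans (norm_nonneg _) (hMg t1 hJne)
  have hMh0 : 0 ≤ Mh := le_trans (norm_nonneg _) (hMh t1 hJne)
  set C : ℝ := Mf * (B + 1) ^ 2 + Mg * (B + 1) + Mh with hC
  have hC0 : 0 ≤ C := by positivity
  set L' : ℝ := 2 * Mf * (B + 1) + Mg with hL'
  have hL'0 : 0 ≤ L' := by positivity
  set ε : ℝ := min 1 (1 / (C + 1)) with hε
  have hε0 : 0 < ε := lt_min one_pos (by positivity)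
  refine ⟨ε, hε0, fun a ha x₀ hx₀ => ?_⟩
  have hIsub : Icc a (a + ε) ⊆ J := by
    apply Icc_subset_Icc ha.1
    have : ε ≤ 1 := min_le_left _ _
    have : a ≤ max bmx t1 := le_trans ha.2 (le_max_left _ _)
    linarith
  have hball : ∀ x : ℝ, x ∈ Metric.closedBall x₀ 1 → |x| ≤ B + 1 := by
    intro x hx
    rw [Metric.mem_closedBall, Real.dist_eq] at hx
    have := abs_sub_abs_le_abs_sub x x₀
    linarith
  have hpl : IsPicardLindelof (riccatiF f g h) (tmin := a) (tmax := a + ε) ⟨a, le_rfl, by linarith⟩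
      x₀ 1 0 (Real.toNNReal C) (Real.toNNReal L') := by
    constructor
    · intro t ht
      apply LipschitzOnWith.of_dist_le_mul
      intro x hx y hy
      rw [Real.dist_eq, Real.dist_eq]
      have hxB := hball x hx
      have hyB := hball y hy
      have key : riccatiF f g h t x - riccatiF f g h t y = -(f t * (x + y) + g t) * (x - y) := by
        simp only [riccatiF]; ring
      rw [key, abs_mul]
      have h1 : |(-(f t * (x + y) + g t))| ≤ L' := by
        have h2 : |f t| ≤ Mf := by
          have := hMf t (hIsub ht); rwa [Real.norm_eq_abs] at this
        have h3 : |g t| ≤ Mg := by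
          have := hMg t (hIsub ht); rwa [Real.norm_eq_abs] at this
        calc |(-(f t * (x + y) + g t))| ≤ |f t| * |x + y| + |g t| := by
              rw [abs_neg]
              refine le_trans (abs_add_le _ _) (by rw [abs_mul])
          _ ≤ Mf * (2 * (B + 1)) + Mg := by
              have : |x + y| ≤ 2 * (B + 1) := by
                calc |x + y| ≤ |x| + |y| := abs_add_le _ _
                  _ ≤ 2 * (B + 1) := by linarith
              have h4 : |f t| * |x + y| ≤ Mf * (2 * (B+1)) :=
                mul_le_mul h2 this (abs_nonneg _) hMf0
              linarith
          _ = L' := by rw [hL']; ring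
      calc |(-(f t * (x + y) + g t))| * |x - y| ≤ L' * |x - y| :=
            mul_le_mul_of_nonneg_right h1 (abs_nonneg _)
        _ = (Real.toNNReal L' : ℝ) * |x - y| := by rw [Real.coe_toNNReal _ hL'0]
    · intro x hx
      have : ContinuousOn (fun t => riccatiF f g h t x) (Icc a (a+ε)) := by
        apply ContinuousOn.neg
        exact (((hf.mono (hIsub.trans hJsub)).mul continuousOn_const).add
          ((hg.mono (hIsub.trans hJsub)).mul continuousOn_const)).add
          (hh.mono (hIsub.trans hJsub))
      exact this
    · intro t ht x hx
      have hxB := hball x hx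
      have h2 : |f t| ≤ Mf := by have := hMf t (hIsub ht); rwa [Real.norm_eq_abs] at this
      have h3 : |g t| ≤ Mg := by have := hMg t (hIsub ht); rwa [Real.norm_eq_abs] at this
      have h4 : |h t| ≤ Mh := by have := hMh t (hIsub ht); rwa [Real.norm_eq_abs] at this
      rw [Real.coe_toNNReal _ hC0]
      rw [Real.norm_eq_abs, riccatiF, abs_neg]
      calc |f t * x ^ 2 + g t * x + h t| ≤ |f t| * |x|^2 + |g t| * |x| + |h t| := by
            refine le_trans (abs_add_le _ _) ?_
            have := abs_add_le (f t * x ^ 2) (g t * x)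
            rw [abs_mul, abs_mul, abs_pow] at *
            linarith
        _ ≤ C := by
            rw [hC]
            have e1 : |f t| * |x|^2 ≤ Mf * (B+1)^2 := by
              apply mul_le_mul h2 _ (by positivity) hMf0
              nlinarith [abs_nonneg x]
            have e2 : |g t| * |x| ≤ Mg * (B+1) :=
              mul_le_mul h3 (by linarith) (abs_nonneg _) hMg0
            linarith
    · rw [Real.coe_toNNReal _ hC0]
      show C * max (a + ε - a) (a - a) ≤ 1 - 0
      rw [sub_zero]
      have : max (a + ε - a) (a - a) = ε := by
        rw [add_sub_cancel_left, sub_self, max_eq_left hε0.le]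
      rw [this]
      have hεle : ε ≤ 1 / (C + 1) := min_le_right _ _
      calc C * ε ≤ C * (1 / (C+1)) := mul_le_mul_of_nonneg_left hεle hC0
        _ ≤ 1 := by
          rw [mul_one_div, div_le_one (by positivity)]; linarith
  obtain ⟨y, hy1, hy2⟩ := hpl.exists_eq_forall_mem_Icc_hasDerivWithinAt₀
  exact ⟨y, hy1, hy2⟩

lemma riccati_unique (f g h : ℝ → ℝ) (t1 a b : ℝ)
    (hf : ContinuousOn f (Ici t1)) (hg : ContinuousOn g (Ici t1))
    (hab : a ≤ b) (ht1a : t1 ≤ a)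
    (y z : ℝ → ℝ)
    (hy : ∀ t ∈ Icc a b, HasDerivWithinAt y (riccatiF f g h t (y t)) (Icc a b) t)
    (hz : ∀ t ∈ Icc a b, HasDerivWithinAt z (riccatiF f g h t (z t)) (Icc a b) t)
    (hinit : y a = z a) : EqOn y z (Icc a b) := by
  have hsub : Icc a b ⊆ Ici t1 := fun x hx => le_trans ht1a hx.1
  have hyc : ContinuousOn y (Icc a b) := fun t ht => (hy t ht).continuousWithinAt
  have hzc : ContinuousOn z (Icc a b) := fun t ht => (hz t ht).continuousWithinAt
  obtain ⟨By, hBy⟩ := isCompact_Icc.exists_bound_of_continuousOn hyc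
  obtain ⟨Bz, hBz⟩ := isCompact_Icc.exists_bound_of_continuousOn hzc
  obtain ⟨Mf, hMf⟩ := isCompact_Icc.exists_bound_of_continuousOn (hf.mono hsub)
  obtain ⟨Mg, hMg⟩ := isCompact_Icc.exists_bound_of_continuousOn (hg.mono hsub)
  have hane : a ∈ Icc a b := ⟨le_rfl, hab⟩
  have hMf0 : 0 ≤ Mf := le_trans (norm_nonneg _) (hMf a hane)
  have hMg0 : 0 ≤ Mg := le_trans (norm_nonneg _) (hMg a hane)
  set B : ℝ := max By Bz with hB
  have hB0 : 0 ≤ B := le_trans (le_trans (norm_nonneg _) (hBy a hane)) (le_max_left _ _)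
  set K : NNReal := Real.toNNReal (2 * Mf * B + Mg) with hK
  set s : ℝ → Set ℝ := fun t => if t ∈ Icc a b then Icc (-B) B else (∅ : Set ℝ) with hs
  have hv : ∀ t, LipschitzOnWith K (riccatiF f g h t) (s t) := by
    intro t
    by_cases ht : t ∈ Icc a b
    · rw [hs]; simp only [if_pos ht]
      apply LipschitzOnWith.of_dist_le_mul
      intro x hx u hu
      rw [Real.dist_eq, Real.dist_eq]
      have key : riccatiF f g h t x - riccatiF f g h t u = -(f t * (x + u) + g t) * (x - u) := by
        simp only [riccatiF]; ring
      rw [key, abs_mul]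
      have hxB : |x| ≤ B := abs_le.2 ⟨hx.1, hx.2⟩
      have huB : |u| ≤ B := abs_le.2 ⟨hu.1, hu.2⟩
      have h2 : |f t| ≤ Mf := by have := hMf t ht; rwa [Real.norm_eq_abs] at this
      have h3 : |g t| ≤ Mg := by have := hMg t ht; rwa [Real.norm_eq_abs] at this
      have h1 : |(-(f t * (x + u) + g t))| ≤ 2 * Mf * B + Mg := by
        rw [abs_neg]
        refine le_trans (abs_add_le _ _) ?_
        rw [abs_mul]
        have h5 : |x + u| ≤ 2 * B := le_trans (abs_add_le _ _) (by linarith)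
        have h6 : |f t| * |x + u| ≤ Mf * (2 * B) := mul_le_mul h2 h5 (abs_nonneg _) hMf0
        linarith
      have hKc : (K : ℝ) = max (2 * Mf * B + Mg) 0 := by
        rw [hK, Real.coe_toNNReal']
      rw [hKc]
      refine mul_le_mul_of_nonneg_right (le_trans h1 (le_max_left _ _)) (abs_nonneg _)
    · rw [hs]; simp only [if_neg ht]
      exact lipschitzOnWith_empty _ _
  intro t ht
  refine ODE_solution_unique_of_mem_Icc_right (fun t _ => hv t) hyc ?_ ?_ hzc ?_ ?_ hinit ht
  · intro u hu
    exact (hy u ⟨hu.1, hu.2.le⟩).mono_of_mem_nhdsWithin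
      (Filter.mem_of_superset (Icc_mem_nhdsGE_of_mem ⟨le_rfl, hu.2⟩) (Icc_subset_Icc hu.1 le_rfl))
  · intro u hu
    rw [hs]; simp only []
    have hcond : u ∈ Icc a b := ⟨hu.1, hu.2.le⟩
    rw [if_pos hcond]
    have := hBy u ⟨hu.1, hu.2.le⟩
    rw [Real.norm_eq_abs] at this
    have : |y u| ≤ B := le_trans this (le_max_left _ _)
    exact ⟨neg_le_of_abs_le this, le_of_abs_le this⟩
  · intro u hu
    exact (hz u ⟨hu.1, hu.2.le⟩).mono_of_mem_nhdsWithin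
      (Filter.mem_of_superset (Icc_mem_nhdsGE_of_mem ⟨le_rfl, hu.2⟩) (Icc_subset_Icc hu.1 le_rfl))
  · intro u hu
    rw [hs]; simp only []
    have hcond : u ∈ Icc a b := ⟨hu.1, hu.2.le⟩
    rw [if_pos hcond]
    have := hBz u ⟨hu.1, hu.2.le⟩
    rw [Real.norm_eq_abs] at this
    have : |z u| ≤ B := le_trans this (le_max_right _ _)
    exact ⟨neg_le_of_abs_le this, le_of_abs_le this⟩

lemma riccati_glue (F : ℝ → ℝ → ℝ) (a b c : ℝ) (y z : ℝ → ℝ) (hab : a ≤ b) (hbc : b ≤ c)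
    (hy : ∀ t ∈ Icc a b, HasDerivWithinAt y (F t (y t)) (Icc a b) t)
    (hz : ∀ t ∈ Icc b c, HasDerivWithinAt z (F t (z t)) (Icc b c) t)
    (hyz : y b = z b) :
    ∃ w : ℝ → ℝ, (∀ t ∈ Icc a b, w t = y t) ∧
      ∀ t ∈ Icc a c, HasDerivWithinAt w (F t (w t)) (Icc a c) t := by
  set w : ℝ → ℝ := fun t => if t ≤ b then y t else z t with hw
  have hwy : ∀ t ∈ Icc a b, w t = y t := fun t ht => if_pos ht.2
  have hwz : ∀ t ∈ Icc b c, w t = z t := by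
    intro t ht
    by_cases htb : t ≤ b
    · have : t = b := le_antisymm htb ht.1
      subst this
      simp only [hw, if_pos le_rfl, hyz]
    · exact if_neg htb
  refine ⟨w, hwy, fun t ht => ?_⟩
  have hw1 : HasDerivWithinAt w (F t (w t)) (Icc a b) t := by
    by_cases htab : t ∈ Icc a b
    · rw [hwy t htab]
      exact (hy t htab).congr (fun u hu => hwy u hu) (hwy t htab)
    · rw [hasDerivWithinAt_iff_hasFDerivWithinAt]
      exact HasFDerivWithinAt.of_notMem_closure (by rwa [isClosed_Icc.closure_eq])
  have hw2 : HasDerivWithinAt w (F t (w t)) (Icc b c) t := by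
    by_cases htbc : t ∈ Icc b c
    · rw [hwz t htbc]
      exact (hz t htbc).congr (fun u hu => hwz u hu) (hwz t htbc)
    · rw [hasDerivWithinAt_iff_hasFDerivWithinAt]
      exact HasFDerivWithinAt.of_notMem_closure (by rwa [isClosed_Icc.closure_eq])
  refine (hw1.union hw2).mono ?_
  intro x hx
  by_cases hxb : x ≤ b
  · exact Or.inl ⟨hx.1, hxb⟩
  · exact Or.inr ⟨le_of_not_ge hxb, hx.2⟩

lemma riccati_compare (t0 t1 : ℝ) (t2 : EReal) (f g h h1 y1 : ℝ → ℝ)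
    (hf : ContinuousOn f (Ici t0)) (hg : ContinuousOn g (Ici t0))
    (ht1 : t0 ≤ t1)
    (hy1 : ∀ t : ℝ, t1 ≤ t → (t : EReal) < t2 →
      HasDerivAt y1 (-(f t * (y1 t) ^ 2 + g t * y1 t + h1 t)) t)
    (hhle : ∀ t : ℝ, t1 ≤ t → (t : EReal) < t2 → h t ≤ h1 t)
    (b : ℝ) (hb1 : t1 ≤ b) (hb2 : (b : EReal) < t2)
    (y : ℝ → ℝ)
    (hy : ∀ t ∈ Icc t1 b, HasDerivWithinAt y (riccatiF f g h t (y t)) (Icc t1 b) t)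
    (hinit : y1 t1 ≤ y t1) :
    ∀ t ∈ Icc t1 b, y1 t ≤ y t := by
  have hmem : ∀ t ∈ Icc t1 b, (t : EReal) < t2 := fun t ht =>
    lt_of_le_of_lt (EReal.coe_le_coe_iff.2 ht.2) hb2
  have hsub : Icc t1 b ⊆ Ici t0 := fun x hx => le_trans ht1 hx.1
  have hyc : ContinuousOn y (Icc t1 b) := fun t ht => (hy t ht).continuousWithinAt
  have hy1c : ContinuousOn y1 (Icc t1 b) := fun t ht =>
    ((hy1 t ht.1 (hmem t ht)).continuousAt).continuousWithinAt
  set z : ℝ → ℝ := fun t => y1 t - y t with hzdef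
  have hzc : ContinuousOn z (Icc t1 b) := hy1c.sub hyc
  -- the coefficient a and its bound
  set A : ℝ → ℝ := fun t => -(f t * (y1 t + y t) + g t) with hA
  have hAc : ContinuousOn A (Icc t1 b) := by
    apply ContinuousOn.neg
    exact (((hf.mono hsub).mul (hy1c.add hyc)).add (hg.mono hsub))
  obtain ⟨K0, hK0⟩ := isCompact_Icc.exists_bound_of_continuousOn hAc
  have hK0' : ∀ t ∈ Icc t1 b, |A t| ≤ K0 := by
    intro t ht; have := hK0 t ht; rwa [Real.norm_eq_abs] at this
  by_contra hcon
  push_neg at hcon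
  obtain ⟨s, hs, hzs⟩ := hcon
  have hzs : 0 < z s := by simp only [hzdef]; linarith
  set Aset : Set ℝ := Icc t1 s ∩ z ⁻¹' (Iic 0) with hAset
  have hAsetne : Aset.Nonempty := ⟨t1, ⟨le_rfl, hs.1⟩, by simp only [mem_preimage, mem_Iic, hzdef]; linarith⟩
  have hAsetbdd : BddAbove Aset := ⟨s, fun u hu => hu.1.2⟩
  have hAsetclosed : IsClosed Aset :=
    (hzc.mono (Icc_subset_Icc le_rfl hs.2)).preimage_isClosed_of_isClosed isClosed_Icc isClosed_Iic
  set r : ℝ := sSup Aset with hr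
  have hrA : r ∈ Aset := hAsetclosed.csSup_mem hAsetne hAsetbdd
  have hrs : r < s := lt_of_le_of_ne hrA.1.2 (by
    intro e
    have : z r ≤ 0 := hrA.2
    rw [e] at this; linarith)
  have ht1r : t1 ≤ r := hrA.1.1
  have hrmem : r ∈ Icc t1 b := ⟨ht1r, le_trans hrA.1.2 hs.2⟩
  have hpos : ∀ u ∈ Ioc r s, 0 < z u := by
    intro u hu
    by_contra hle
    push_neg at hle
    have : u ∈ Aset := ⟨⟨le_trans ht1r hu.1.le, hu.2⟩, by simpa [mem_preimage, mem_Iic] using hle⟩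
    have := le_csSup hAsetbdd this
    exact absurd (lt_of_lt_of_le hu.1 this) (lt_irrefl _)
  -- z r ≥ 0 by continuity from the right
  have hzr0 : 0 ≤ z r := by
    have hne : (𝓝[Ioc r s] r).NeBot := by
      apply mem_closure_iff_nhdsWithin_neBot.mp
      rw [closure_Ioc hrs.ne]
      exact ⟨le_rfl, hrs.le⟩
    have htend : Filter.Tendsto z (𝓝[Ioc r s] r) (𝓝 (z r)) := by
      apply ((hzc r hrmem).mono ?_).tendsto
      intro u hu
      exact ⟨le_trans ht1r hu.1.le, le_trans hu.2 (le_trans hs.2 le_rfl)⟩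
    exact ge_of_tendsto htend (Filter.eventually_of_mem self_mem_nhdsWithin
      (fun u hu => (hpos u hu).le))
  have hznn : ∀ x ∈ Ico r s, 0 ≤ z x := by
    intro x hx
    rcases eq_or_lt_of_le hx.1 with hxe | hxl
    · rw [← hxe]; exact hzr0
    · exact (hpos x ⟨hxl, hx.2.le⟩).le
  -- derivative of z
  have hz' : ∀ x ∈ Ico r s, HasDerivWithinAt z (A x * z x + (h x - h1 x)) (Ici x) x := by
    intro x hx
    have hxmem : x ∈ Icc t1 b := ⟨le_trans ht1r hx.1, le_trans hx.2.le hs.2⟩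
    have hxb : x < b := lt_of_lt_of_le hx.2 hs.2
    have hyd : HasDerivWithinAt y (riccatiF f g h x (y x)) (Ici x) x :=
      (hy x hxmem).mono_of_mem_nhdsWithin
        (Filter.mem_of_superset (Icc_mem_nhdsGE_of_mem ⟨le_rfl, hxb⟩)
          (Icc_subset_Icc hxmem.1 le_rfl))
    have hy1d : HasDerivWithinAt y1 (-(f x * (y1 x) ^ 2 + g x * y1 x + h1 x)) (Ici x) x :=
      (hy1 x hxmem.1 (hmem x hxmem)).hasDerivWithinAt
    have := hy1d.sub hyd
    refine this.congr_deriv ?_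
    simp only [riccatiF, hzdef, hA]
    ring
  -- Gronwall
  have hgr := le_gronwallBound_of_liminf_deriv_right_le (f := z)
    (f' := fun x => A x * z x + (h x - h1 x)) (δ := 0) (K := K0) (ε := 0) (a := r) (b := s)
    (hzc.mono (Icc_subset_Icc ht1r hs.2))
    (fun x hx r' hr' => by
      simpa only [slope_def_field, div_eq_inv_mul] using (hz' x hx).liminf_right_slope_le hr')
    hrA.2
    (fun x hx => by
      show A x * z x + (h x - h1 x) ≤ K0 * z x + 0
      have hxmem : x ∈ Icc t1 b := ⟨le_trans ht1r hx.1, le_trans hx.2.le hs.2⟩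
      have h1le : h x - h1 x ≤ 0 := sub_nonpos.2 (hhle x hxmem.1 (hmem x hxmem))
      have hz0 : 0 ≤ z x := hznn x hx
      have : A x * z x ≤ K0 * z x :=
        mul_le_mul_of_nonneg_right (le_trans (le_abs_self _) (hK0' x hxmem)) hz0
      linarith)
  have := hgr s ⟨hrs.le, le_rfl⟩
  rw [gronwallBound_ε0_δ0] at this
  linarith

lemma riccati_upper (t1 : ℝ) (t2 : EReal) (f g h y1 : ℝ → ℝ)
    (hfnonneg : ∀ t : ℝ, t1 ≤ t → (t : EReal) < t2 → 0 ≤ f t)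
    (bmx : ℝ) (hbmx1 : t1 ≤ bmx) (hbmx2 : (bmx : EReal) < t2)
    (B1 K M : ℝ)
    (hB1 : ∀ t ∈ Icc t1 bmx, |y1 t| ≤ B1)
    (hK0 : 0 ≤ K)
    (hKg : ∀ t ∈ Icc t1 bmx, |g t| ≤ K)
    (hM : ∀ t ∈ Icc t1 bmx, |h t| ≤ M)
    (b : ℝ) (hb1 : t1 ≤ b) (hb2 : b ≤ bmx)
    (y : ℝ → ℝ)
    (hy : ∀ t ∈ Icc t1 b, HasDerivWithinAt y (riccatiF f g h t (y t)) (Icc t1 b) t)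
    (hlow : ∀ t ∈ Icc t1 b, y1 t ≤ y t) :
    ∀ t ∈ Icc t1 b, y t ≤ gronwallBound (y t1 + B1) K (K * B1 + M) (bmx - t1) - B1 := by
  have ht1mem : t1 ∈ Icc t1 bmx := ⟨le_rfl, hbmx1⟩
  have hB10 : 0 ≤ B1 := le_trans (abs_nonneg _) (hB1 t1 ht1mem)
  have hM0 : 0 ≤ M := le_trans (abs_nonneg _) (hM t1 ht1mem)
  set u : ℝ → ℝ := fun t => y t + B1 with hu
  have hyc : ContinuousOn y (Icc t1 b) := fun t ht => (hy t ht).continuousWithinAt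
  have huc : ContinuousOn u (Icc t1 b) := hyc.add continuousOn_const
  set δ : ℝ := y t1 + B1 with hδdef
  have hδ0 : 0 ≤ δ := by
    have := hlow t1 ⟨le_rfl, hb1⟩
    have h2 := hB1 t1 ht1mem
    have := neg_le_of_abs_le h2
    simp only [hδdef]; linarith
  set ε : ℝ := K * B1 + M with hεdef
  have hε0 : 0 ≤ ε := by positivity
  have hgr := le_gronwallBound_of_liminf_deriv_right_le (f := u)
    (f' := fun x => riccatiF f g h x (y x)) (δ := δ) (K := K) (ε := ε) (a := t1) (b := b)
    huc
    (fun x hx r' hr' => by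
      have hxb : x < b := hx.2
      have hu' : HasDerivWithinAt u (riccatiF f g h x (y x)) (Ici x) x := by
        have hyd : HasDerivWithinAt y (riccatiF f g h x (y x)) (Ici x) x :=
          (hy x ⟨hx.1, hx.2.le⟩).mono_of_mem_nhdsWithin
            (Filter.mem_of_superset (Icc_mem_nhdsGE_of_mem ⟨le_rfl, hxb⟩)
              (Icc_subset_Icc hx.1 le_rfl))
        exact hyd.add_const B1
      simpa only [slope_def_field, div_eq_inv_mul] using hu'.liminf_right_slope_le hr')
    le_rfl
    (fun x hx => by
      show riccatiF f g h x (y x) ≤ K * u x + ε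
      have hxmem : x ∈ Icc t1 bmx := ⟨hx.1, le_trans hx.2.le hb2⟩
      have hxt2 : (x : EReal) < t2 := lt_of_le_of_lt (EReal.coe_le_coe_iff.2 hxmem.2) hbmx2
      have hfx : 0 ≤ f x := hfnonneg x hx.1 hxt2
      have hgx := hKg x hxmem
      have hhx := hM x hxmem
      have hylow : -B1 ≤ y x := by
        have := hlow x ⟨hx.1, hx.2.le⟩
        have := neg_le_of_abs_le (hB1 x hxmem)
        linarith
      have habs : |y x| ≤ y x + 2 * B1 := by
        rcases abs_cases (y x) with ⟨he, _⟩ | ⟨he, _⟩ <;> linarith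
      have h1 : -(g x * y x) ≤ K * (y x + 2 * B1) := by
        have : -(g x * y x) ≤ |g x * y x| := neg_le_abs _
        rw [abs_mul] at this
        have h2 : |g x| * |y x| ≤ K * (y x + 2 * B1) :=
          mul_le_mul hgx habs (abs_nonneg _) hK0
        linarith
      have h3 : -(h x) ≤ M := by
        have := neg_le_abs (h x); linarith
      have h4 : 0 ≤ f x * (y x) ^ 2 := by positivity
      simp only [riccatiF, hu, hεdef]
      linarith)
  intro t ht
  have h5 := hgr t ht
  have h6 : gronwallBound δ K ε (t - t1) ≤ gronwallBound δ K ε (bmx - t1) :=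
    gronwallBound_mono_x hδ0 hK0 hε0 (by linarith [ht.1]) (by linarith [ht.2])
  simp only [hu] at h5
  simp only [hδdef, hεdef] at *
  linarith


/- STATEMENT 0 (Theorem 2.1): Riccati comparison theorem.
   The interval is [t1, t2) where t0 ≤ t1 < t2 ≤ +∞, so t2 : EReal. -/

/- STATEMENT 0 (Theorem 2.1): Riccati comparison theorem.
   The interval is [t1, t2) where t0 ≤ t1 < t2 ≤ +∞, so t2 : EReal. -/

theorem riccati_comparison
    (t0 t1 : ℝ) (t2 : EReal)
    (f g h h1 : ℝ → ℝ)
    (hf : ContinuousOn f (Set.Ici t0)) (hg : ContinuousOn g (Set.Ici t0))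
    (hh : ContinuousOn h (Set.Ici t0)) (hh1 : ContinuousOn h1 (Set.Ici t0))
    (ht1 : t0 ≤ t1) (ht2 : (t1 : EReal) < t2)
    (y1 : ℝ → ℝ)
    (hy1 : ∀ t : ℝ, t1 ≤ t → (t : EReal) < t2 →
      HasDerivAt y1 (-(f t * (y1 t) ^ 2 + g t * y1 t + h1 t)) t)
    (hfnonneg : ∀ t : ℝ, t1 ≤ t → (t : EReal) < t2 → 0 ≤ f t)
    (hhle : ∀ t : ℝ, t1 ≤ t → (t : EReal) < t2 → h t ≤ h1 t)
    (y0 : ℝ) (hy0 : y1 t1 ≤ y0) :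
    ∃ y : ℝ → ℝ, y t1 = y0 ∧
      (∀ t : ℝ, t1 ≤ t → (t : EReal) < t2 →
        HasDerivAt y (-(f t * (y t) ^ 2 + g t * y t + h t)) t) ∧
      (∀ t : ℝ, t1 ≤ t → (t : EReal) < t2 → y1 t ≤ y t) := by
  classical
  set S : Set ℝ := {b : ℝ | t1 ≤ b ∧ (b : EReal) < t2 ∧ ∃ y : ℝ → ℝ, y t1 = y0 ∧
    ∀ t ∈ Icc t1 b, HasDerivWithinAt y (riccatiF f g h t (y t)) (Icc t1 b) t} with hSdef
  have ht1S : t1 ∈ S := by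
    refine ⟨le_rfl, ht2, fun _ => y0, rfl, ?_⟩
    intro t ht
    rw [Icc_self] at ht ⊢
    rw [mem_singleton_iff] at ht
    subst ht
    rw [hasDerivWithinAt_iff_tendsto_slope]
    have he : ({t} : Set ℝ) \ {t} = (∅ : Set ℝ) := diff_self
    rw [he, nhdsWithin_empty]
    exact tendsto_bot
  have Sdown : ∀ b ∈ S, ∀ b', t1 ≤ b' → b' ≤ b → b' ∈ S := by
    intro b hb b' h1' h2'
    obtain ⟨hb1, hb2, y, hyi, hyd⟩ := hb
    exact ⟨h1', lt_of_le_of_lt (EReal.coe_le_coe_iff.2 h2') hb2, y, hyi,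
      fun t ht => (hyd t (Icc_subset_Icc_right h2' ht)).mono (Icc_subset_Icc_right h2')⟩
  have key : ∀ b : ℝ, t1 ≤ b → (b : EReal) < t2 → b ∈ S := by
    by_contra hcon
    push_neg at hcon
    obtain ⟨bst, hbst1, hbst2, hbstS⟩ := hcon
    have hbdd : ∀ b ∈ S, b ≤ bst := by
      intro b hb
      by_contra hgt
      exact hbstS (Sdown b hb bst hbst1 (le_of_not_ge hgt))
    have hSne : S.Nonempty := ⟨t1, ht1S⟩
    have hSbdd : BddAbove S := ⟨bst, hbdd⟩
    set T : ℝ := sSup S with hTdef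
    have hT1 : t1 ≤ T := le_csSup hSbdd ht1S
    -- bounds
    have hy1c : ContinuousOn y1 (Icc t1 bst) := fun t ht =>
      ((hy1 t ht.1 (lt_of_le_of_lt (EReal.coe_le_coe_iff.2 ht.2) hbst2)).continuousAt).continuousWithinAt
    obtain ⟨B1, hB1n⟩ := isCompact_Icc.exists_bound_of_continuousOn hy1c
    have hB1' : ∀ t ∈ Icc t1 bst, |y1 t| ≤ B1 := by
      intro t ht; have := hB1n t ht; rwa [Real.norm_eq_abs] at this
    have hsubst : Icc t1 bst ⊆ Ici t0 := fun x hx => le_trans ht1 hx.1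
    obtain ⟨Kg, hKgn⟩ := isCompact_Icc.exists_bound_of_continuousOn (hg.mono hsubst)
    have hKg' : ∀ t ∈ Icc t1 bst, |g t| ≤ Kg := by
      intro t ht; have := hKgn t ht; rwa [Real.norm_eq_abs] at this
    obtain ⟨Mh, hMhn⟩ := isCompact_Icc.exists_bound_of_continuousOn (hh.mono hsubst)
    have hMh' : ∀ t ∈ Icc t1 bst, |h t| ≤ Mh := by
      intro t ht; have := hMhn t ht; rwa [Real.norm_eq_abs] at this
    have ht1m : t1 ∈ Icc t1 bst := ⟨le_rfl, hbst1⟩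
    have hB10 : 0 ≤ B1 := le_trans (abs_nonneg _) (hB1' t1 ht1m)
    have hKg0 : 0 ≤ Kg := le_trans (abs_nonneg _) (hKg' t1 ht1m)
    set gb : ℝ := gronwallBound (y0 + B1) Kg (Kg * B1 + Mh) (bst - t1) with hgbdef
    set B : ℝ := B1 + |gb| with hBdef
    have hB0 : 0 ≤ B := by positivity
    -- uniform bound on all solutions
    have UB : ∀ b ∈ S, ∀ y : ℝ → ℝ, y t1 = y0 →
        (∀ t ∈ Icc t1 b, HasDerivWithinAt y (riccatiF f g h t (y t)) (Icc t1 b) t) →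
        ∀ t ∈ Icc t1 b, |y t| ≤ B ∧ y1 t ≤ y t := by
      intro b hb y hyi hyd t ht
      have hlow := riccati_compare t0 t1 t2 f g h h1 y1 hf hg ht1 hy1 hhle b hb.1 hb.2.1 y hyd
        (by rw [hyi]; exact hy0)
      have hup := riccati_upper t1 t2 f g h y1 hfnonneg bst hbst1 hbst2 B1 Kg Mh hB1' hKg0 hKg'
        hMh' b hb.1 (hbdd b hb) y hyd hlow t ht
      rw [hyi] at hup
      have htm : t ∈ Icc t1 bst := ⟨ht.1, le_trans ht.2 (hbdd b hb)⟩
      have hl : -B1 ≤ y1 t := neg_le_of_abs_le (hB1' t htm)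
      have hlt := hlow t ht
      constructor
      · rw [abs_le]
        constructor
        · have : -B ≤ -B1 := by
            rw [hBdef]; have := abs_nonneg gb; linarith
          linarith
        · have : gb - B1 ≤ B := by
            rw [hBdef]; have := le_abs_self gb; linarith
          rw [← hgbdef] at hup
          linarith
      · exact hlt
    -- uniform local existence
    obtain ⟨ε, hε0, hloc⟩ := riccati_local_exists f g h t1 bst B
      (hf.mono (Ici_subset_Ici.2 ht1)) (hg.mono (Ici_subset_Ici.2 ht1))
      (hh.mono (Ici_subset_Ici.2 ht1)) hB0
    obtain ⟨b, hbS, hbT⟩ := exists_lt_of_lt_csSup hSne (show T - ε / 2 < T by linarith)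
    obtain ⟨hb1, hb2, y, hyi, hyd⟩ := hbS
    have hbS' : b ∈ S := ⟨hb1, hb2, y, hyi, hyd⟩
    have hbbst : b ≤ bst := hbdd b hbS'
    have hyb : |y b| ≤ B := (UB b hbS' y hyi hyd b ⟨hb1, le_rfl⟩).1
    obtain ⟨z, hz1, hz2⟩ := hloc b ⟨hb1, hbbst⟩ (y b) hyb
    set b'' : ℝ := min (b + ε) bst with hb''def
    have hbb'' : b ≤ b'' := le_min (by linarith) hbbst
    have hzres : ∀ t ∈ Icc b b'', HasDerivWithinAt z (riccatiF f g h t (z t)) (Icc b b'') t := by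
      intro t ht
      have hsub' : Icc b b'' ⊆ Icc b (b + ε) := Icc_subset_Icc_right (min_le_left _ _)
      exact (hz2 t (hsub' ht)).mono hsub'
    obtain ⟨w, hw1, hw2⟩ := riccati_glue (riccatiF f g h) t1 b b'' y z hb1 hbb'' hyd hzres hz1.symm
    have hw0 : w t1 = y0 := by rw [hw1 t1 ⟨le_rfl, hb1⟩, hyi]
    have hb''S : b'' ∈ S := ⟨le_trans hb1 hbb'',
      lt_of_le_of_lt (EReal.coe_le_coe_iff.2 (min_le_right _ _)) hbst2, w, hw0, hw2⟩
    have hb''T : b'' ≤ T := le_csSup hSbdd hb''S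
    rcases le_or_gt (b + ε) bst with hle | hlt
    · have : b'' = b + ε := min_eq_left hle
      rw [this] at hb''T
      linarith
    · have : b'' = bst := min_eq_right hlt.le
      rw [this] at hb''S
      exact hbstS hb''S
  -- assemble the global solution
  have hchoice : ∀ b ∈ S, ∃ y : ℝ → ℝ, y t1 = y0 ∧
      ∀ t ∈ Icc t1 b, HasDerivWithinAt y (riccatiF f g h t (y t)) (Icc t1 b) t :=
    fun b hb => hb.2.2
  set Y : ℝ → ℝ := fun t =>
    if ht : t1 ≤ t ∧ (t : EReal) < t2 then
      Classical.choose (hchoice t (key t ht.1 ht.2)) t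
    else y0 + riccatiF f g h t1 y0 * (t - t1) with hYdef
  have coh : ∀ (b : ℝ) (hb1 : t1 ≤ b) (hb2 : (b : EReal) < t2),
      ∀ s ∈ Icc t1 b, Y s = Classical.choose (hchoice b (key b hb1 hb2)) s := by
    intro b hb1 hb2 s hs
    have hs1 : t1 ≤ s := hs.1
    have hs2 : (s : EReal) < t2 := lt_of_le_of_lt (EReal.coe_le_coe_iff.2 hs.2) hb2
    have hY : Y s = Classical.choose (hchoice s (key s hs1 hs2)) s := dif_pos ⟨hs1, hs2⟩
    rw [hY]
    obtain ⟨hsi, hsd⟩ := Classical.choose_spec (hchoice s (key s hs1 hs2))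
    obtain ⟨hbi, hbd⟩ := Classical.choose_spec (hchoice b (key b hb1 hb2))
    have huniq := riccati_unique f g h t0 t1 s hf hg hs1 ht1
      (Classical.choose (hchoice s (key s hs1 hs2)))
      (Classical.choose (hchoice b (key b hb1 hb2)))
      hsd
      (fun t ht => (hbd t (Icc_subset_Icc_right hs.2 ht)).mono (Icc_subset_Icc_right hs.2))
      (by rw [hsi, hbi])
    exact huniq ⟨hs1, le_rfl⟩
  have hYt1 : Y t1 = y0 := by
    have hY : Y t1 = Classical.choose (hchoice t1 (key t1 le_rfl ht2)) t1 := dif_pos ⟨le_rfl, ht2⟩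
    rw [hY]
    exact (Classical.choose_spec (hchoice t1 (key t1 le_rfl ht2))).1
  refine ⟨Y, hYt1, ?_, ?_⟩
  · intro t htt1 htt2
    obtain ⟨b, htb, hbt2⟩ := EReal.exists_between_coe_real htt2
    have htb' : t < b := EReal.coe_lt_coe_iff.1 htb
    have hb1 : t1 ≤ b := le_trans htt1 htb'.le
    obtain ⟨hbi, hbd⟩ := Classical.choose_spec (hchoice b (key b hb1 hbt2))
    set yb : ℝ → ℝ := Classical.choose (hchoice b (key b hb1 hbt2)) with hybdef
    have hYt : Y t = yb t := coh b hb1 hbt2 t ⟨htt1, htb'.le⟩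
    have hgoal : -(f t * (Y t) ^ 2 + g t * Y t + h t) = riccatiF f g h t (yb t) := by
      rw [hYt]; simp [riccatiF]
    rw [hgoal]
    rcases eq_or_lt_of_le htt1 with heq | hlt
    · -- t = t1
      subst heq
      have hr : HasDerivWithinAt Y (riccatiF f g h t1 (yb t1)) (Ici t1) t1 := by
        have h0 := (hbd t1 ⟨le_rfl, htb'.le⟩).congr
          (fun u hu => coh b hb1 hbt2 u hu) hYt
        exact h0.mono_of_mem_nhdsWithin (Icc_mem_nhdsGE htb')
      have hl : HasDerivWithinAt Y (riccatiF f g h t1 (yb t1)) (Iic t1) t1 := by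
        have hlin : HasDerivAt (fun s => y0 + riccatiF f g h t1 y0 * (s - t1))
            (riccatiF f g h t1 y0) t1 := by
          have h1' := ((hasDerivAt_id t1).sub_const t1).const_mul (riccatiF f g h t1 y0)
          have h2' := h1'.const_add y0
          simpa using h2'
        have hval : riccatiF f g h t1 (yb t1) = riccatiF f g h t1 y0 := by rw [hbi]
        rw [hval]
        refine (hlin.hasDerivWithinAt).congr ?_ ?_
        · intro u hu
          rcases eq_or_lt_of_le (mem_Iic.1 hu) with hue | hul
          · rw [hue, hYt1]; simp
          · have hnc : ¬(t1 ≤ u ∧ (u : EReal) < t2) := fun hc => absurd hc.1 (not_le.2 hul)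
            rw [hYdef]
            simp only [dif_neg hnc]
        · rw [hYt1]; simp
      have hu2 := hl.union hr
      rw [Iic_union_Ici] at hu2
      rwa [hasDerivWithinAt_univ] at hu2
    · -- t1 < t
      have hd : HasDerivAt yb (riccatiF f g h t (yb t)) t :=
        (hbd t ⟨htt1, htb'.le⟩).hasDerivAt (Icc_mem_nhds hlt htb')
      refine hd.congr_of_eventuallyEq ?_
      exact Filter.eventuallyEq_of_mem (Icc_mem_nhds hlt htb') (fun u hu => coh b hb1 hbt2 u hu)
  · intro t htt1 htt2
    obtain ⟨b, htb, hbt2⟩ := EReal.exists_between_coe_real htt2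
    have htb' : t < b := EReal.coe_lt_coe_iff.1 htb
    have hb1 : t1 ≤ b := le_trans htt1 htb'.le
    obtain ⟨hbi, hbd⟩ := Classical.choose_spec (hchoice b (key b hb1 hbt2))
    rw [coh b hb1 hbt2 t ⟨htt1, htb'.le⟩]
    exact riccati_compare t0 t1 t2 f g h h1 y1 hf hg ht1 hy1 hhle b hb1 hbt2 _ hbd
      (by rw [hbi]; exact hy0) t ⟨htt1, htb'.le⟩
end

section
/- Let Z0 be a solution of the matrix Riccati equation (2.3) on [t1, t2), where t0 ≤ t1 < t2 < +∞. If the real-valued function G(t) = ∫_{t1}^t tr[B(τ) Z0(τ)] dτ, t ∈ [t1, t2), is bounded from below on [t1, t2), then [t1, t2) is not the maximal existence interval of Z0; that is, Z0 can be continued to the right of t2 as a solution of (2.3): there exist ε > 0 and a solution Z of (2.3) on [t1, t2 + ε) that agrees with Z0 on [t1, t2). -/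
open Matrix MeasureTheory intervalIntegral Set

noncomputable section

/- STATEMENT 2 (Lemma 2.1): a solution of the 2×2 matrix Riccati equation
   Z' + Z B Z + A* Z + Z A - C = 0 on [t1, t2) with t2 < ∞ can be continued to
   the right of t2 provided G(t) = ∫_{t1}^t tr(B Z₀) is bounded below. -/

abbrev Mat2 := Matrix (Fin 2) (Fin 2) ℂ

/-- Entrywise derivative of a matrix-valued function. -/
def EntryDeriv (Z : ℝ → Mat2) (D : Mat2) (t : ℝ) : Prop :=
  ∀ i j, HasDerivAt (fun s => Z s i j) (D i j) t

attribute [local instance] Matrix.linftyOpNormedAddCommGroup Matrix.linftyOpNormedRing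
  Matrix.linftyOpNormedSpace Matrix.linftyOpNormedAlgebra Matrix.linftyOpIsBoundedSMul

example : NormedRing Mat2 := by infer_instance
example : NormedAlgebra ℝ Mat2 := by infer_instance
example : NormedSpace ℂ Mat2 := by infer_instance
example : CompleteSpace Mat2 := by infer_instance
example : FiniteDimensional ℝ Mat2 := by infer_instance

def entryCLM (i j : Fin 2) : Mat2 →L[ℝ] ℂ :=
  LinearMap.toContinuousLinearMap
    { toFun := fun M => M i j, map_add' := fun _ _ => rfl, map_smul' := fun _ _ => rfl }

lemma HasDerivAt.entry {Z : ℝ → Mat2} {D : Mat2} {t : ℝ} (h : HasDerivAt Z D t) (i j : Fin 2) :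
    HasDerivAt (fun s => Z s i j) (D i j) t :=
  ((entryCLM i j).hasFDerivAt.comp_hasDerivAt t h :)

lemma hasDerivAt_of_entries {Z : ℝ → Mat2} {D : Mat2} {t : ℝ}
    (h : ∀ i j, HasDerivAt (fun s => Z s i j) (D i j) t) : HasDerivAt Z D t := by
  have : ∀ s, Z s = ∑ i : Fin 2, ∑ j : Fin 2, (Z s i j) • Matrix.single i j (1 : ℂ) := by
    intro s
    conv_lhs => rw [matrix_eq_sum_single (Z s)]
    simp [Matrix.smul_single]
  have hD : D = ∑ i : Fin 2, ∑ j : Fin 2, (D i j) • Matrix.single i j (1 : ℂ) := by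
    conv_lhs => rw [matrix_eq_sum_single D]
    simp [Matrix.smul_single]
  have h2 : HasDerivAt (fun s => ∑ i : Fin 2, ∑ j : Fin 2,
      (Z s i j) • Matrix.single i j (1 : ℂ))
      (∑ i : Fin 2, ∑ j : Fin 2, (D i j) • Matrix.single i j (1 : ℂ)) t :=
    HasDerivAt.fun_sum fun i _ => HasDerivAt.fun_sum fun j _ => (h i j).smul_const _
  rw [hD]
  exact h2.congr_of_eventuallyEq (Filter.Eventually.of_forall fun s => this s)

lemma entryDeriv_iff {Z : ℝ → Mat2} {D : Mat2} {t : ℝ} :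
    EntryDeriv Z D t ↔ HasDerivAt Z D t :=
  ⟨fun h => hasDerivAt_of_entries h, fun h i j => h.entry i j⟩

lemma continuous_of_entries {Z : ℝ → Mat2} (h : ∀ i j, Continuous fun t => Z t i j) :
    Continuous Z := by
  have : ∀ s, Z s = ∑ i : Fin 2, ∑ j : Fin 2, (Z s i j) • Matrix.single i j (1 : ℂ) := by
    intro s
    conv_lhs => rw [matrix_eq_sum_single (Z s)]
    simp [Matrix.smul_single]
  have h2 : Continuous fun s => ∑ i : Fin 2, ∑ j : Fin 2,
      (Z s i j) • Matrix.single i j (1 : ℂ) :=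
    continuous_finset_sum _ fun i _ => continuous_finset_sum _ fun j _ =>
      ((h i j).smul continuous_const)
  exact h2.congr fun s => (this s).symm

/-- 2×2 adjugate as a linear expression. -/
lemma adj2 (X : Mat2) : X.trace • (1 : Mat2) - X = X.adjugate := by
  rw [Matrix.adjugate_fin_two]
  ext i j
  fin_cases i <;> fin_cases j <;>
    simp [Matrix.trace_fin_two, Matrix.one_apply, Matrix.smul_apply]

lemma mul_adj2 (X : Mat2) : X * (X.trace • (1 : Mat2) - X) = X.det • 1 := by
  rw [adj2, Matrix.mul_adjugate]

lemma inv_eq2 (X : Mat2) (h : X.det ≠ 0) :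
    X⁻¹ = (X.det)⁻¹ • (X.trace • (1 : Mat2) - X) := by
  apply Matrix.inv_eq_right_inv
  rw [Matrix.mul_smul, mul_adj2, smul_smul, inv_mul_cancel₀ h, one_smul]

lemma hasDerivAt_det2 {U : ℝ → Mat2} {D : Mat2} {t : ℝ} (h : HasDerivAt U D t) :
    HasDerivAt (fun s => (U s).det)
      (D 0 0 * U t 1 1 + U t 0 0 * D 1 1 - (D 0 1 * U t 1 0 + U t 0 1 * D 1 0)) t := by
  simp only [Matrix.det_fin_two]
  exact (((h.entry 0 0).mul (h.entry 1 1))).sub (((h.entry 0 1).mul (h.entry 1 0)))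

lemma hasDerivAt_trace2 {U : ℝ → Mat2} {D : Mat2} {t : ℝ} (h : HasDerivAt U D t) :
    HasDerivAt (fun s => (U s).trace) D.trace t := by
  simp only [Matrix.trace_fin_two]
  exact (h.entry 0 0).add (h.entry 1 1)

/-- If `U' = M U` for 2×2 matrices, then `(det U)' = tr M · det U`. -/
lemma det_deriv_formula (M U : Mat2) :
    (M * U) 0 0 * U 1 1 + U 0 0 * (M * U) 1 1 - ((M * U) 0 1 * U 1 0 + U 0 1 * (M * U) 1 0)
      = M.trace * U.det := by
  simp only [Matrix.mul_apply, Matrix.trace_fin_two, Matrix.det_fin_two, Fin.sum_univ_two]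
  ring

lemma HasDerivAt.cinv {c : ℝ → ℂ} {c' : ℂ} {t : ℝ} (hc : HasDerivAt c c' t)
    (hx : c t ≠ 0) : HasDerivAt (fun τ => (c τ)⁻¹) (-c' / c t ^ 2) t := by
  have h1 := ((hasDerivAt_inv hx).hasFDerivAt.restrictScalars ℝ).comp_hasDerivAt t hc
  refine HasDerivAt.congr_deriv h1 ?_
  simp [ContinuousLinearMap.smulRight_apply, smul_eq_mul]
  field_simp

lemma hasDerivAt_inv2 {U Uf : ℝ → Mat2} {s : Set ℝ} (hs : IsOpen s) {t : ℝ} (ht : t ∈ s)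
    (hU : ∀ τ ∈ s, HasDerivAt U (Uf τ) τ) (hdet : ∀ τ ∈ s, (U τ).det ≠ 0) :
    HasDerivAt (fun τ => (U τ)⁻¹) (-((U t)⁻¹ * Uf t * (U t)⁻¹)) t := by
  set N : ℝ → Mat2 := fun τ => ((U τ).det)⁻¹ • ((U τ).trace • (1 : Mat2) - U τ) with hN
  have hNeq : ∀ τ ∈ s, (U τ)⁻¹ = N τ := fun τ hτ => inv_eq2 _ (hdet τ hτ)
  -- derivative of N
  have hdet' : HasDerivAt (fun τ => ((U τ).det)⁻¹)
      (-(((Uf t) 0 0 * U t 1 1 + U t 0 0 * (Uf t) 1 1 -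
        ((Uf t) 0 1 * U t 1 0 + U t 0 1 * (Uf t) 1 0))) / ((U t).det) ^ 2) t :=
    (hasDerivAt_det2 (hU t ht)).cinv (hdet t ht)
  have hlin : HasDerivAt (fun τ => (U τ).trace • (1 : Mat2) - U τ)
      ((Uf t).trace • (1 : Mat2) - Uf t) t :=
    ((hasDerivAt_trace2 (hU t ht)).smul_const _).sub (hU t ht)
  set D₀ : Mat2 :=
    ((U t).det)⁻¹ • ((Uf t).trace • (1 : Mat2) - Uf t)
    + (-(((Uf t) 0 0 * U t 1 1 + U t 0 0 * (Uf t) 1 1 -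
        ((Uf t) 0 1 * U t 1 0 + U t 0 1 * (Uf t) 1 0))) / ((U t).det) ^ 2) •
      ((U t).trace • (1 : Mat2) - U t) with hD₀
  have hNder : HasDerivAt N D₀ t := hdet'.smul hlin
  have hder : HasDerivAt (fun τ => (U τ)⁻¹) D₀ t :=
    hNder.congr_of_eventuallyEq <|
      Filter.eventuallyEq_of_mem (hs.mem_nhds ht) fun τ hτ => hNeq τ hτ
  -- identify D₀
  have hmul : HasDerivAt (fun τ => U τ * (U τ)⁻¹) (Uf t * (U t)⁻¹ + U t * D₀) t :=
    (hU t ht).mul hder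
  have hone : (fun τ => U τ * (U τ)⁻¹) =ᶠ[nhds t] fun _ => (1 : Mat2) :=
    Filter.eventuallyEq_of_mem (hs.mem_nhds ht) fun τ hτ =>
      Matrix.mul_nonsing_inv _ (Ne.isUnit (hdet τ hτ))
  have hz : HasDerivAt (fun _ : ℝ => (1 : Mat2)) (Uf t * (U t)⁻¹ + U t * D₀) t :=
    hmul.congr_of_eventuallyEq hone.symm
  have h0 : Uf t * (U t)⁻¹ + U t * D₀ = 0 :=
    hz.unique (hasDerivAt_const t 1)
  have hUD : U t * D₀ = -(Uf t * (U t)⁻¹) := by linear_combination (norm := module) h0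
  have hD : D₀ = -((U t)⁻¹ * Uf t * (U t)⁻¹) := by
    have h2 := congrArg (fun X => (U t)⁻¹ * X) hUD
    rw [← mul_assoc, Matrix.nonsing_inv_mul _ (Ne.isUnit (hdet t ht)), one_mul,
      mul_neg, ← mul_assoc] at h2
    exact h2
  rwa [hD] at hder

section LinearODE

variable {E : Type*} [NormedAddCommGroup E] [NormedSpace ℝ E] [CompleteSpace E]

lemma picard_step (v : ℝ → E → E) (K : ℝ) (hK : 0 ≤ K) (c d : ℝ) (hcd : c ≤ d)
    (hlip : ∀ t ∈ Icc c d, ∀ x y, ‖v t x - v t y‖ ≤ K * ‖x - y‖)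
    (hbound : ∀ t ∈ Icc c d, ∀ x : E, ‖v t x‖ ≤ K * ‖x‖)
    (hcont : ∀ x, ContinuousOn (fun t => v t x) (Icc c d))
    (hsmall : K * (d - c) ≤ 1 / 2) (x₀ : E) :
    ∃ f : ℝ → E, f c = x₀ ∧ ∀ t ∈ Icc c d, HasDerivWithinAt f (v t (f t)) (Icc c d) t := by
  have hpl : IsPicardLindelof v (tmin := c) (tmax := d) ⟨c, le_rfl, hcd⟩ x₀
      ⟨‖x₀‖ + 1, by positivity⟩ 0 ⟨K * (2 * ‖x₀‖ + 1), by positivity⟩ K.toNNReal := by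
    constructor
    · intro t ht
      apply LipschitzOnWith.of_dist_le_mul
      intro x _ y _
      rw [dist_eq_norm, dist_eq_norm]
      simpa [Real.coe_toNNReal K hK] using hlip t ht x y
    · intro x _
      exact hcont x
    · intro t ht x hx
      have h1 : ‖x‖ ≤ 2 * ‖x₀‖ + 1 := by
        have := mem_closedBall_iff_norm.mp hx
        change ‖x - x₀‖ ≤ ‖x₀‖ + 1 at this
        have h2 : ‖x‖ - ‖x₀‖ ≤ ‖x - x₀‖ := norm_sub_norm_le _ _
        linarith
      show ‖v t x‖ ≤ K * (2 * ‖x₀‖ + 1)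
      calc ‖v t x‖ ≤ K * ‖x‖ := hbound t ht x
        _ ≤ K * (2 * ‖x₀‖ + 1) := by nlinarith [norm_nonneg x]
    · show K * (2 * ‖x₀‖ + 1) * max (d - c) (c - c) ≤ (‖x₀‖ + 1) - ((0 : NNReal) : ℝ)
      have : max (d - c) (c - c) = d - c := by
        rw [max_eq_left]; linarith
      rw [this, NNReal.coe_zero, sub_zero]
      have h0 : (0:ℝ) ≤ ‖x₀‖ := norm_nonneg _
      nlinarith
  exact IsPicardLindelof.exists_eq_forall_mem_Icc_hasDerivWithinAt₀ hpl

lemma linear_ODE_exists (v : ℝ → E → E) (K : ℝ) (hK : 0 ≤ K) (a b : ℝ) (hab : a ≤ b)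
    (hlip : ∀ t ∈ Icc a b, ∀ x y, ‖v t x - v t y‖ ≤ K * ‖x - y‖)
    (hbound : ∀ t ∈ Icc a b, ∀ x : E, ‖v t x‖ ≤ K * ‖x‖)
    (hcont : ∀ x, ContinuousOn (fun t => v t x) (Icc a b)) (x₀ : E) :
    ∃ f : ℝ → E, f a = x₀ ∧ ∀ t ∈ Icc a b, HasDerivWithinAt f (v t (f t)) (Icc a b) t := by
  set n : ℕ := ⌈2 * K * (b - a)⌉₊ + 1 with hn
  set h : ℝ := (b - a) / n with hh
  have hnpos : (0:ℝ) < n := by positivity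
  have hh0 : 0 ≤ h := by
    rw [hh]; apply div_nonneg <;> linarith
  have hsmall : K * h ≤ 1 / 2 := by
    have h1 : 2 * K * (b - a) ≤ n := by
      have := Nat.le_ceil (2 * K * (b - a))
      rw [hn]
      push_cast
      linarith
    have h2 : K * h = K * (b - a) / n := by rw [hh]; ring
    rw [h2, div_le_iff₀ hnpos]
    nlinarith
  have hnh : a + (n:ℝ) * h = b := by
    rw [hh]
    field_simp
    ring
  -- key induction
  have key : ∀ i : ℕ, i ≤ n → ∃ f : ℝ → E, f a = x₀ ∧
      ∀ t ∈ Icc a (a + i * h), HasDerivWithinAt f (v t (f t)) (Icc a (a + i * h)) t := by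
    intro i
    induction i with
    | zero =>
      intro _
      simp only [Nat.cast_zero, zero_mul, add_zero]
      have hsub0 : Icc a a ⊆ Icc a b := Icc_subset_Icc le_rfl hab
      exact picard_step v K hK a a le_rfl (fun t ht => hlip t (hsub0 ht))
        (fun t ht => hbound t (hsub0 ht)) (fun x => (hcont x).mono hsub0) (by norm_num) x₀
    | succ i ih =>
      intro hin
      have hi_le : i ≤ n := Nat.le_of_succ_le hin
      obtain ⟨f₁, hf₁a, hf₁⟩ := ih hi_le
      set m : ℝ := a + i * h with hm
      set d : ℝ := a + (i + 1 : ℕ) * h with hd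
      have hdm : d - m = h := by rw [hd, hm]; push_cast; ring
      have ham : a ≤ m := by
        rw [hm]; nlinarith [Nat.cast_nonneg (α := ℝ) i]
      have hmd : m ≤ d := by linarith
      have hdb : d ≤ b := by
        have h3 : ((i:ℝ) + 1) ≤ (n:ℝ) := by exact_mod_cast hin
        have h4 : ((i + 1 : ℕ):ℝ) = (i:ℝ) + 1 := by push_cast; ring
        rw [hd, ← hnh, h4]
        nlinarith
      have hsub : Icc m d ⊆ Icc a b := Icc_subset_Icc (by linarith) hdb
      obtain ⟨f₂, hf₂m, hf₂⟩ := picard_step v K hK m d hmd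
        (fun t ht => hlip t (hsub ht)) (fun t ht => hbound t (hsub ht))
        (fun x => (hcont x).mono hsub) (by rw [hdm]; exact hsmall) (f₁ m)
      refine ⟨fun t => if t ≤ m then f₁ t else f₂ t, by simp [ham, hf₁a], ?_⟩
      have hEq1 : EqOn (fun t => if t ≤ m then f₁ t else f₂ t) f₁ (Icc a m) :=
        fun s hs => if_pos hs.2
      have hEq2 : EqOn (fun t => if t ≤ m then f₁ t else f₂ t) f₂ (Icc m d) := by
        intro s hs
        by_cases hsm : s ≤ m
        · have : s = m := le_antisymm hsm hs.1
          simp [hsm, this, hf₂m]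
        · simp [hsm]
      have hIcc : Icc a m ∪ Icc m d = Icc a d := Icc_union_Icc_eq_Icc ham hmd
      intro t ht
      set F : ℝ → E := fun t => if t ≤ m then f₁ t else f₂ t with hF
      show HasDerivWithinAt F (v t (F t)) (Icc a d) t
      rcases lt_trichotomy t m with htm | htm | htm
      · -- t < m
        have hmem : t ∈ Icc a m := ⟨ht.1, le_of_lt htm⟩
        have hFt : F t = f₁ t := hEq1 hmem
        have hF1 : HasDerivWithinAt F (v t (F t)) (Icc a m) t := by
          rw [hFt]
          exact (hf₁ t hmem).congr hEq1 hFt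
        apply hF1.mono_of_mem_nhdsWithin
        have : Icc a m = Icc a d ∩ Iic m := by
          ext x
          simp only [mem_Icc, mem_inter_iff, mem_Iic]
          exact ⟨fun ⟨h1, h2⟩ => ⟨⟨h1, h2.trans hmd⟩, h2⟩, fun ⟨⟨h1, _⟩, h2⟩ => ⟨h1, h2⟩⟩
        rw [this]
        exact Filter.inter_mem self_mem_nhdsWithin
          (mem_nhdsWithin_of_mem_nhds (Iic_mem_nhds htm))
      · -- t = m
        have hmem1 : t ∈ Icc a m := ⟨ht.1, le_of_eq htm⟩
        have hmem2 : t ∈ Icc m d := ⟨le_of_eq htm.symm, ht.2⟩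
        have hFt : F t = f₁ t := hEq1 hmem1
        have hF1 : HasDerivWithinAt F (v t (F t)) (Icc a m) t := by
          rw [hFt]
          exact (hf₁ t hmem1).congr hEq1 hFt
        have hF2 : HasDerivWithinAt F (v t (F t)) (Icc m d) t := by
          have hFt2 : F t = f₂ t := hEq2 hmem2
          rw [hFt2]
          exact (hf₂ t hmem2).congr hEq2 hFt2
        have := hF1.union hF2
        rwa [hIcc] at this
      · -- t > m
        have htd : t ∈ Icc m d := ⟨le_of_lt htm, ht.2⟩
        have hF2 : HasDerivWithinAt F (v t (F t)) (Icc m d) t := by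
          have hFt2 : F t = f₂ t := hEq2 htd
          rw [hFt2]
          exact (hf₂ t htd).congr hEq2 hFt2
        apply hF2.mono_of_mem_nhdsWithin
        have : Icc m d = Icc a d ∩ Ici m := by
          ext x
          simp only [mem_Icc, mem_inter_iff, mem_Ici]
          exact ⟨fun ⟨h1, h2⟩ => ⟨⟨ham.trans h1, h2⟩, h1⟩, fun ⟨⟨_, h2⟩, h1⟩ => ⟨h1, h2⟩⟩
        rw [this]
        exact Filter.inter_mem self_mem_nhdsWithin
          (mem_nhdsWithin_of_mem_nhds (Ici_mem_nhds htm))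
  obtain ⟨f, hfa, hf⟩ := key n le_rfl
  rw [hnh] at hf
  exact ⟨f, hfa, hf⟩

end LinearODE

lemma HasDerivWithinAt.entry {Z : ℝ → Mat2} {D : Mat2} {s : Set ℝ} {t : ℝ}
    (h : HasDerivWithinAt Z D s t) (i j : Fin 2) :
    HasDerivWithinAt (fun τ => Z τ i j) (D i j) s t :=
  ((entryCLM i j).hasFDerivAt.comp_hasDerivWithinAt t h :)

lemma hasDerivWithinAt_det2 {U : ℝ → Mat2} {D : Mat2} {s : Set ℝ} {t : ℝ}
    (h : HasDerivWithinAt U D s t) :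
    HasDerivWithinAt (fun τ => (U τ).det)
      (D 0 0 * U t 1 1 + U t 0 0 * D 1 1 - (D 0 1 * U t 1 0 + U t 0 1 * D 1 0)) s t := by
  simp only [Matrix.det_fin_two]
  exact (((h.entry 0 0).mul (h.entry 1 1))).sub (((h.entry 0 1).mul (h.entry 1 0)))

lemma continuous_det2 : Continuous fun M : Mat2 => M.det := by
  simp only [Matrix.det_fin_two]
  exact ((entryCLM 0 0).continuous.mul (entryCLM 1 1).continuous).sub
    ((entryCLM 0 1).continuous.mul (entryCLM 1 0).continuous)

lemma icc_mem_nhdsWithin_Ici2 {a b t c : ℝ} (h1 : a ≤ t) (h2 : t < b) (hc : c ≤ a) :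
    Icc c b ∈ nhdsWithin t (Ici t) :=
  Filter.mem_of_superset
    (Filter.inter_mem self_mem_nhdsWithin (mem_nhdsWithin_of_mem_nhds (Iio_mem_nhds h2)))
    (fun x hx => ⟨hc.trans (h1.trans hx.1), le_of_lt hx.2⟩)

lemma continuousOn_entry {X : ℝ → Mat2} {s : Set ℝ} (h : ContinuousOn X s) (i j : Fin 2) :
    ContinuousOn (fun τ => X τ i j) s :=
  ((entryCLM i j).continuous.comp_continuousOn h :)

lemma continuousOn_trace {X : ℝ → Mat2} {s : Set ℝ} (h : ContinuousOn X s) :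
    ContinuousOn (fun τ => (X τ).trace) s := by
  have e : (fun τ => (X τ).trace) = fun τ => X τ 0 0 + X τ 1 1 := by
    funext τ; simp [Matrix.trace_fin_two]
  rw [e]
  exact (continuousOn_entry h 0 0).add (continuousOn_entry h 1 1)

theorem riccati_matrix_continuation
    (t0 t1 t2 : ℝ) (A B C : ℝ → Mat2)
    (hA : ∀ i j, ContinuousOn (fun t => A t i j) (Set.Ici t0))
    (hB : ∀ i j, ContinuousOn (fun t => B t i j) (Set.Ici t0))
    (hC : ∀ i j, ContinuousOn (fun t => C t i j) (Set.Ici t0))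
    (hBherm : ∀ t, t0 ≤ t → (B t)ᴴ = B t)
    (hCherm : ∀ t, t0 ≤ t → (C t)ᴴ = C t)
    (ht1 : t0 ≤ t1) (ht12 : t1 < t2)
    (Z0 Z0' : ℝ → Mat2)
    (hsol : ∀ t ∈ Set.Ico t1 t2, EntryDeriv Z0 (Z0' t) t ∧
      Z0' t + Z0 t * B t * Z0 t + (A t)ᴴ * Z0 t + Z0 t * A t - C t = 0)
    (hbdd : ∃ m : ℝ, ∀ t ∈ Set.Ico t1 t2,
      m ≤ ∫ τ in t1..t, ((B τ * Z0 τ).trace).re) :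
    ∃ ε : ℝ, 0 < ε ∧ ∃ Z Z' : ℝ → Mat2,
      (∀ t ∈ Set.Ico t1 (t2 + ε), EntryDeriv Z (Z' t) t ∧
        Z' t + Z t * B t * Z t + (A t)ᴴ * Z t + Z t * A t - C t = 0) ∧
      (∀ t ∈ Set.Ico t1 t2, Z t = Z0 t) := by
  classical
  obtain ⟨m₀, hm₀⟩ := hbdd
  have ht02 : t0 ≤ t2 := ht1.trans (le_of_lt ht12)
  set b' : ℝ := t2 + 1 with hb'
  have ht1b' : t1 ≤ b' := by linarith
  -- extended coefficients
  set Ab : ℝ → Mat2 := fun t => A (max t t0) with hAbdef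
  set Bb : ℝ → Mat2 := fun t => B (max t t0) with hBbdef
  set Cb : ℝ → Mat2 := fun t => C (max t t0) with hCbdef
  have hAbeq : ∀ t : ℝ, t0 ≤ t → Ab t = A t := fun t h => by
    rw [hAbdef]; simp [max_eq_left h]
  have hBbeq : ∀ t : ℝ, t0 ≤ t → Bb t = B t := fun t h => by
    rw [hBbdef]; simp [max_eq_left h]
  have hCbeq : ∀ t : ℝ, t0 ≤ t → Cb t = C t := fun t h => by
    rw [hCbdef]; simp [max_eq_left h]
  have hmaxmem : ∀ t : ℝ, max t t0 ∈ Set.Ici t0 := fun t => mem_Ici.mpr (le_max_right t t0)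
  have hmaxcont : Continuous fun t : ℝ => max t t0 := continuous_id.max continuous_const
  have hAbe : ∀ i j, Continuous fun t => Ab t i j := fun i j =>
    (hA i j).comp_continuous hmaxcont hmaxmem
  have hBbe : ∀ i j, Continuous fun t => Bb t i j := fun i j =>
    (hB i j).comp_continuous hmaxcont hmaxmem
  have hCbe : ∀ i j, Continuous fun t => Cb t i j := fun i j =>
    (hC i j).comp_continuous hmaxcont hmaxmem
  have hAbc : Continuous Ab := continuous_of_entries hAbe
  have hBbc : Continuous Bb := continuous_of_entries hBbe
  have hCbc : Continuous Cb := continuous_of_entries hCbe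
  have hAbHc : Continuous fun t => (Ab t)ᴴ := continuous_of_entries fun i j => by
    simp only [Matrix.conjTranspose_apply]
    exact (hAbe j i).star
  -- Lipschitz bound for coefficients
  obtain ⟨K₀, hK₀⟩ := (isCompact_Icc : IsCompact (Icc t1 b')).exists_bound_of_continuousOn
    (f := fun t => (‖Ab t‖ + ‖Bb t‖ + ‖Cb t‖ + ‖(Ab t)ᴴ‖ : ℝ))
    (((hAbc.norm.add hBbc.norm).add hCbc.norm).add hAbHc.norm).continuousOn
  set K : ℝ := max K₀ 0 with hKdef
  have hK : 0 ≤ K := le_max_right _ _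
  have hKb : ∀ t ∈ Icc t1 b', ‖Ab t‖ + ‖Bb t‖ + ‖Cb t‖ + ‖(Ab t)ᴴ‖ ≤ K := by
    intro t ht
    have h1 := hK₀ t ht
    have h2 := le_abs_self (‖Ab t‖ + ‖Bb t‖ + ‖Cb t‖ + ‖(Ab t)ᴴ‖)
    rw [Real.norm_eq_abs] at h1
    calc ‖Ab t‖ + ‖Bb t‖ + ‖Cb t‖ + ‖(Ab t)ᴴ‖ ≤ K₀ := le_trans h2 h1
      _ ≤ K := le_max_left _ _
  -- the linear system
  set v : ℝ → Mat2 × Mat2 → Mat2 × Mat2 :=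
    fun t p => (Ab t * p.1 + Bb t * p.2, Cb t * p.1 - (Ab t)ᴴ * p.2) with hvdef
  have hvlip : ∀ t ∈ Icc t1 b', ∀ x y : Mat2 × Mat2, ‖v t x - v t y‖ ≤ K * ‖x - y‖ := by
    intro t ht x y
    have hKt := hKb t ht
    have hd : v t x - v t y =
        (Ab t * (x.1 - y.1) + Bb t * (x.2 - y.2),
         Cb t * (x.1 - y.1) - (Ab t)ᴴ * (x.2 - y.2)) := by
      rw [hvdef]
      refine Prod.ext ?_ ?_ <;>
        simp only [Prod.fst_sub, Prod.snd_sub, mul_sub] <;> abel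
    rw [hd]
    have h1 : ‖x.1 - y.1‖ ≤ ‖x - y‖ := norm_fst_le (x - y)
    have h2 : ‖x.2 - y.2‖ ≤ ‖x - y‖ := norm_snd_le (x - y)
    have hA0 : (0:ℝ) ≤ ‖Ab t‖ := norm_nonneg _
    have hB0 : (0:ℝ) ≤ ‖Bb t‖ := norm_nonneg _
    have hC0 : (0:ℝ) ≤ ‖Cb t‖ := norm_nonneg _
    have hAH0 : (0:ℝ) ≤ ‖(Ab t)ᴴ‖ := norm_nonneg _
    have hz : (0:ℝ) ≤ ‖x - y‖ := norm_nonneg _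
    rw [Prod.norm_def]
    apply max_le
    · calc ‖Ab t * (x.1 - y.1) + Bb t * (x.2 - y.2)‖
          ≤ ‖Ab t * (x.1 - y.1)‖ + ‖Bb t * (x.2 - y.2)‖ := norm_add_le _ _
        _ ≤ ‖Ab t‖ * ‖x.1 - y.1‖ + ‖Bb t‖ * ‖x.2 - y.2‖ :=
            add_le_add (norm_mul_le _ _) (norm_mul_le _ _)
        _ ≤ K * ‖x - y‖ := by nlinarith
    · calc ‖Cb t * (x.1 - y.1) - (Ab t)ᴴ * (x.2 - y.2)‖
          ≤ ‖Cb t * (x.1 - y.1)‖ + ‖(Ab t)ᴴ * (x.2 - y.2)‖ := norm_sub_le _ _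
        _ ≤ ‖Cb t‖ * ‖x.1 - y.1‖ + ‖(Ab t)ᴴ‖ * ‖x.2 - y.2‖ :=
            add_le_add (norm_mul_le _ _) (norm_mul_le _ _)
        _ ≤ K * ‖x - y‖ := by nlinarith
  have hvzero : ∀ t, v t 0 = 0 := by
    intro t
    rw [hvdef]
    simp
  have hvbound : ∀ t ∈ Icc t1 b', ∀ x : Mat2 × Mat2, ‖v t x‖ ≤ K * ‖x‖ := by
    intro t ht x
    have := hvlip t ht x 0
    rwa [hvzero, sub_zero, sub_zero] at this
  have hvcont : ∀ x : Mat2 × Mat2, ContinuousOn (fun t => v t x) (Icc t1 b') := by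
    intro x
    rw [hvdef]
    exact (((hAbc.mul continuous_const).add (hBbc.mul continuous_const)).prodMk
      ((hCbc.mul continuous_const).sub (hAbHc.mul continuous_const))).continuousOn
  obtain ⟨W, hWinit, hW⟩ := linear_ODE_exists v K hK t1 b' ht1b' hvlip hvbound hvcont
    ((1 : Mat2), Z0 t1)
  set U : ℝ → Mat2 := fun t => (W t).1 with hUdef
  set V : ℝ → Mat2 := fun t => (W t).2 with hVdef
  have hU1 : U t1 = 1 := by simp only [hUdef, hWinit]
  have hV1 : V t1 = Z0 t1 := by simp only [hVdef, hWinit]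
  -- within-derivatives of U and V
  have hUW : ∀ t ∈ Icc t1 b',
      HasDerivWithinAt U (Ab t * U t + Bb t * V t) (Icc t1 b') t := fun t ht =>
    (hW t ht).fst
  have hVW : ∀ t ∈ Icc t1 b',
      HasDerivWithinAt V (Cb t * U t - (Ab t)ᴴ * V t) (Icc t1 b') t := fun t ht =>
    (hW t ht).snd
  have hUc : ContinuousOn U (Icc t1 b') := fun t ht => (hUW t ht).continuousWithinAt
  have hVc : ContinuousOn V (Icc t1 b') := fun t ht => (hVW t ht).continuousWithinAt
  have hUd : ∀ t ∈ Ioo t1 b', HasDerivAt U (Ab t * U t + Bb t * V t) t := fun t ht =>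
    (hUW t (Ioo_subset_Icc_self ht)).hasDerivAt (Icc_mem_nhds ht.1 ht.2)
  have hVd : ∀ t ∈ Ioo t1 b', HasDerivAt V (Cb t * U t - (Ab t)ᴴ * V t) t := fun t ht =>
    (hVW t (Ioo_subset_Icc_self ht)).hasDerivAt (Icc_mem_nhds ht.1 ht.2)
  -- matrix-level Riccati for Z0
  have hsolM : ∀ t ∈ Set.Ico t1 t2, HasDerivAt Z0 (Z0' t) t := fun t ht =>
    entryDeriv_iff.mp (hsol t ht).1
  have hZ0eq : ∀ t ∈ Set.Ico t1 t2,
      Z0' t = C t - Z0 t * B t * Z0 t - (A t)ᴴ * Z0 t - Z0 t * A t := by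
    intro t ht
    have e := (hsol t ht).2
    rw [← sub_eq_zero]
    rw [← e]
    abel
  have hZ0c : ∀ t ∈ Set.Ico t1 t2, ContinuousAt Z0 t := fun t ht =>
    (hsolM t ht).continuousAt
  -- STEP 1 : V = Z0 * U on [t1, t2)
  have hVZU : ∀ t ∈ Set.Ico t1 t2, V t = Z0 t * U t := by
    intro T hT
    set Y : ℝ → Mat2 := fun t => V t - Z0 t * U t with hYdef
    have hTb : Icc t1 T ⊆ Icc t1 b' := Icc_subset_Icc le_rfl (by linarith [hT.2])
    have hIcoT : Ico t1 T ⊆ Ico t1 t2 := Ico_subset_Ico le_rfl (le_of_lt hT.2)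
    have hIccT : Icc t1 T ⊆ Ico t1 t2 := fun τ hτ => ⟨hτ.1, lt_of_le_of_lt hτ.2 hT.2⟩
    have hZ0cOn : ContinuousOn Z0 (Icc t1 T) := fun τ hτ =>
      (hZ0c τ (hIccT hτ)).continuousWithinAt
    set M2 : ℝ → Mat2 := fun t => (Ab t)ᴴ + Z0 t * Bb t with hM2def
    have hM2c : ContinuousOn M2 (Icc t1 T) :=
      hAbHc.continuousOn.add (hZ0cOn.mul hBbc.continuousOn)
    obtain ⟨K₂, hK₂⟩ := (isCompact_Icc : IsCompact (Icc t1 T)).exists_bound_of_continuousOn hM2c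
    have hYc : ContinuousOn Y (Icc t1 T) :=
      (hVc.mono hTb).sub (hZ0cOn.mul (hUc.mono hTb))
    have hY1 : Y t1 = 0 := by
      simp only [hYdef, hV1, hU1, mul_one, sub_self]
    have hYd : ∀ t ∈ Ico t1 T,
        HasDerivWithinAt Y (-(M2 t * Y t)) (Ici t) t := by
      intro t ht
      have htt2 : t < t2 := lt_of_lt_of_le ht.2 (le_of_lt hT.2)
      have htb' : t < b' := by rw [hb']; linarith
      have hmem : Icc t1 b' ∈ nhdsWithin t (Ici t) :=
        icc_mem_nhdsWithin_Ici2 ht.1 htb' le_rfl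
      have htIcc : t ∈ Icc t1 b' := ⟨ht.1, le_of_lt htb'⟩
      have hUt : HasDerivWithinAt U (Ab t * U t + Bb t * V t) (Ici t) t :=
        (hUW t htIcc).mono_of_mem_nhdsWithin hmem
      have hVt : HasDerivWithinAt V (Cb t * U t - (Ab t)ᴴ * V t) (Ici t) t :=
        (hVW t htIcc).mono_of_mem_nhdsWithin hmem
      have hZt : HasDerivWithinAt Z0 (Z0' t) (Ici t) t :=
        (hsolM t ⟨ht.1, htt2⟩).hasDerivWithinAt
      have hcomb := hVt.sub (hZt.mul hUt)
      have ht0t : t0 ≤ t := ht1.trans ht.1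
      have hval : Cb t * U t - (Ab t)ᴴ * V t -
          (Z0' t * U t + Z0 t * (Ab t * U t + Bb t * V t)) = -(M2 t * Y t) := by
        rw [hM2def]
        simp only [hYdef, hAbeq t ht0t, hBbeq t ht0t, hCbeq t ht0t,
          hZ0eq t ⟨ht.1, htt2⟩]
        noncomm_ring
      rw [← hval]
      exact hcomb
    have hgron := norm_le_gronwallBound_of_norm_deriv_right_le (δ := 0) (K := K₂) (ε := 0) hYc hYd
      (by rw [hY1]; simp) (fun t ht => by
        have h1 : ‖M2 t * Y t‖ ≤ ‖M2 t‖ * ‖Y t‖ := norm_mul_le _ _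
        have h2 : ‖M2 t‖ ≤ K₂ := hK₂ t (Ico_subset_Icc_self ht)
        have h3 : (0:ℝ) ≤ ‖Y t‖ := norm_nonneg _
        rw [norm_neg]
        nlinarith)
      T ⟨hT.1, le_rfl⟩
    rw [gronwallBound_ε0_δ0] at hgron
    have : Y T = 0 := norm_le_zero_iff.mp hgron
    have := sub_eq_zero.mp (by simpa [hYdef] using this)
    exact this
  -- STEP 2 : det U = exp(F) on [t1, t2)
  set Z0m : ℝ → Mat2 := fun τ => Z0 (max τ t1) with hZ0mdef
  have hZ0meq : ∀ τ : ℝ, t1 ≤ τ → Z0m τ = Z0 τ := fun τ h => by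
    rw [hZ0mdef]; simp [max_eq_left h]
  have hZ0mc : ContinuousOn Z0m (Iio t2) := by
    have houter : ContinuousOn Z0 (Ico t1 t2) := fun s hs => (hZ0c s hs).continuousWithinAt
    exact houter.comp (continuous_id.max continuous_const).continuousOn
      (fun τ hτ => ⟨le_max_right _ _, max_lt hτ ht12⟩)
  set φ : ℝ → ℂ := fun τ => (Ab τ).trace + (Bb τ * Z0m τ).trace with hφdef
  have hφc : ContinuousOn φ (Iio t2) :=
    (continuousOn_trace hAbc.continuousOn).add
      (continuousOn_trace (hBbc.continuousOn.mul hZ0mc))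
  set g : ℝ → ℂ := fun t => (U t).det with hgdef
  have hgc : ContinuousOn g (Icc t1 b') := continuous_det2.comp_continuousOn hUc
  have hg1 : g t1 = 1 := by rw [hgdef]; simp only [hU1, Matrix.det_one]
  set F : ℝ → ℂ := fun t => ∫ τ in t1..t, φ τ with hFdef
  have hintφ : ∀ t ∈ Ico t1 t2, IntervalIntegrable φ volume t1 t := by
    intro t ht
    have hsub : uIcc t1 t ⊆ Iio t2 := by
      rw [uIcc_of_le ht.1]
      exact fun τ hτ => lt_of_le_of_lt hτ.2 ht.2
    exact (hφc.mono hsub).intervalIntegrable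
  have hFd : ∀ t ∈ Ico t1 t2, HasDerivAt F (φ t) t := by
    intro t ht
    exact intervalIntegral.integral_hasDerivAt_right (hintφ t ht)
      (hφc.stronglyMeasurableAtFilter isOpen_Iio t ht.2)
      (hφc.continuousAt (Iio_mem_nhds ht.2))
  have hgd : ∀ t ∈ Ico t1 t2, HasDerivWithinAt g (φ t * g t) (Ici t) t := by
    intro t ht
    have ht0t : t0 ≤ t := ht1.trans ht.1
    have htb' : t < b' := by rw [hb']; linarith [ht.2]
    have htIcc : t ∈ Icc t1 b' := ⟨ht.1, le_of_lt htb'⟩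
    have hmem : Icc t1 b' ∈ nhdsWithin t (Ici t) :=
      icc_mem_nhdsWithin_Ici2 ht.1 htb' le_rfl
    have hUt : HasDerivWithinAt U ((A t + B t * Z0 t) * U t) (Ici t) t := by
      have h0 := (hUW t htIcc).mono_of_mem_nhdsWithin hmem
      have : Ab t * U t + Bb t * V t = (A t + B t * Z0 t) * U t := by
        rw [hAbeq t ht0t, hBbeq t ht0t, hVZU t ht]
        noncomm_ring
      rwa [this] at h0
    have hdt := hasDerivWithinAt_det2 hUt
    rw [det_deriv_formula] at hdt
    have hφval : φ t = (A t + B t * Z0 t).trace := by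
      rw [hφdef]
      simp only
      rw [hAbeq t ht0t, hBbeq t ht0t, hZ0meq t ht.1, Matrix.trace_add]
    rw [hgdef]
    simp only
    rw [hφval]
    exact hdt
  have hgF : ∀ t ∈ Ico t1 t2, g t = Complex.exp (F t) := by
    intro T hT
    have hIccT : Icc t1 T ⊆ Ico t1 t2 := fun τ hτ => ⟨hτ.1, lt_of_le_of_lt hτ.2 hT.2⟩
    have hIcoT : Ico t1 T ⊆ Ico t1 t2 := fun τ hτ => ⟨hτ.1, lt_of_lt_of_le hτ.2 (le_of_lt hT.2)⟩
    have hFcT : ContinuousOn F (Icc t1 T) := fun τ hτ =>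
      (hFd τ (hIccT hτ)).continuousAt.continuousWithinAt
    have hTb : Icc t1 T ⊆ Icc t1 b' := Icc_subset_Icc le_rfl (by linarith [hT.2])
    have hconst := constant_of_has_deriv_right_zero (a := t1) (b := T)
      (f := fun t => g t * Complex.exp (-F t))
      (((hgc.mono hTb)).mul ((hFcT.neg).cexp))
      (fun x hx => by
        have hx2 := hIcoT hx
        have hgx := hgd x hx2
        have hEx : HasDerivWithinAt (fun t => Complex.exp (-F t))
            (Complex.exp (-F x) * (-φ x)) (Ici x) x :=
          (((hFd x hx2).neg).cexp).hasDerivWithinAt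
        have := hgx.mul hEx
        refine HasDerivWithinAt.congr_deriv this ?_
        ring)
    have hh := hconst T ⟨hT.1, le_rfl⟩
    have hF1 : F t1 = 0 := by rw [hFdef]; simp
    simp only [hF1, hg1, neg_zero, Complex.exp_zero, mul_one] at hh
    rwa [Complex.exp_neg, mul_inv_eq_one₀ (Complex.exp_ne_zero _)] at hh
  -- lower bound for |det U|
  obtain ⟨K₃, hK₃⟩ := (isCompact_Icc : IsCompact (Icc t1 t2)).exists_bound_of_continuousOn
    (f := fun τ => ((Ab τ).trace).re)
    (Complex.continuous_re.comp_continuousOn (continuousOn_trace hAbc.continuousOn))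
  have hK₃0 : 0 ≤ K₃ :=
    le_trans (norm_nonneg _) (hK₃ t1 ⟨le_rfl, le_of_lt ht12⟩)
  set ρ : ℝ := Real.exp (m₀ - K₃ * (t2 - t1)) with hρdef
  have hρpos : 0 < ρ := Real.exp_pos _
  have hglb : ∀ t ∈ Ico t1 t2, ρ ≤ ‖g t‖ := by
    intro t ht
    have hsub : uIcc t1 t ⊆ Iio t2 := by
      rw [uIcc_of_le ht.1]
      exact fun τ hτ => lt_of_le_of_lt hτ.2 ht.2
    have hint1 : IntervalIntegrable (fun τ => ((Ab τ).trace).re) volume t1 t :=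
      ((Complex.continuous_re.comp_continuousOn
        (continuousOn_trace hAbc.continuousOn)).mono hsub).intervalIntegrable
    have hint2 : IntervalIntegrable (fun τ => ((Bb τ * Z0m τ).trace).re) volume t1 t :=
      ((Complex.continuous_re.comp_continuousOn
        (continuousOn_trace (hBbc.continuousOn.mul hZ0mc))).mono hsub).intervalIntegrable
    have hre : (F t).re = (∫ τ in t1..t, ((Ab τ).trace).re)
        + ∫ τ in t1..t, ((Bb τ * Z0m τ).trace).re := by
      have h1 : (F t).re = ∫ τ in t1..t, (φ τ).re := by
        have h0 := Complex.reCLM.intervalIntegral_comp_comm (hintφ t ht)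
        simp only [Complex.reCLM_apply] at h0
        rw [hFdef]
        exact h0.symm
      rw [h1]
      have h2 : (fun τ => (φ τ).re)
          = fun τ => ((Ab τ).trace).re + ((Bb τ * Z0m τ).trace).re := by
        funext τ
        rw [hφdef]
        exact Complex.add_re _ _
      rw [h2, intervalIntegral.integral_add hint1 hint2]
    have hψ2 : m₀ ≤ ∫ τ in t1..t, ((Bb τ * Z0m τ).trace).re := by
      have : (∫ τ in t1..t, ((Bb τ * Z0m τ).trace).re)
          = ∫ τ in t1..t, ((B τ * Z0 τ).trace).re := by
        apply intervalIntegral.integral_congr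
        intro τ hτ
        rw [uIcc_of_le ht.1] at hτ
        have ht0τ : t0 ≤ τ := ht1.trans hτ.1
        show ((Bb τ * Z0m τ).trace).re = ((B τ * Z0 τ).trace).re
        rw [hBbeq τ ht0τ, hZ0meq τ hτ.1]
      rw [this]
      exact hm₀ t ht
    have hψ1 : |∫ τ in t1..t, ((Ab τ).trace).re| ≤ K₃ * (t2 - t1) := by
      have hb := intervalIntegral.norm_integral_le_of_norm_le_const
        (C := K₃) (f := fun τ => ((Ab τ).trace).re) (a := t1) (b := t)
        (fun x hx => by
          rw [uIoc_of_le ht.1] at hx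
          exact hK₃ x ⟨le_of_lt hx.1, le_trans hx.2 (le_of_lt ht.2)⟩)
      rw [Real.norm_eq_abs] at hb
      have : |t - t1| ≤ t2 - t1 := by
        rw [abs_of_nonneg (by linarith [ht.1])]
        linarith [ht.2]
      calc |∫ τ in t1..t, ((Ab τ).trace).re| ≤ K₃ * |t - t1| := hb
        _ ≤ K₃ * (t2 - t1) := by nlinarith
    have hFre : m₀ - K₃ * (t2 - t1) ≤ (F t).re := by
      rw [hre]
      have := abs_le.mp hψ1
      linarith [this.1]
    rw [hgF t ht, Complex.norm_exp, hρdef]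
    exact Real.exp_le_exp.mpr hFre
  have hgne : ∀ t ∈ Ico t1 t2, g t ≠ 0 := by
    intro t ht h0
    have := hglb t ht
    rw [h0] at this
    simp at this
    linarith
  -- value at t2
  have ht2Icc : t2 ∈ Icc t1 b' := ⟨le_of_lt ht12, by rw [hb']; linarith⟩
  have hgt2 : ρ ≤ ‖g t2‖ := by
    have hc2 : ContinuousWithinAt g (Ico t1 t2) t2 :=
      (hgc t2 ht2Icc).mono (fun τ hτ => ⟨hτ.1, by rw [hb']; linarith [hτ.2.le]⟩)
    have hne : (nhdsWithin t2 (Ico t1 t2)).NeBot := by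
      apply mem_closure_iff_nhdsWithin_neBot.mp
      rw [closure_Ico (ne_of_lt ht12)]
      exact ⟨le_of_lt ht12, le_rfl⟩
    have htend : Filter.Tendsto (fun t => ‖g t‖) (nhdsWithin t2 (Ico t1 t2))
        (nhds (‖g t2‖)) :=
      (continuous_norm.continuousAt.tendsto).comp hc2
    exact ge_of_tendsto htend (Filter.eventually_of_mem self_mem_nhdsWithin
      fun x hx => hglb x hx)
  have hgt2ne : g t2 ≠ 0 := by
    intro h0
    rw [h0] at hgt2
    simp at hgt2
    linarith
  -- choose ε
  have hgat : ∀ x ∈ Ioo t1 b', ContinuousAt g x := fun x hx =>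
    continuous_det2.continuousAt.comp (hUd x hx).continuousAt
  have ht2Ioo : t2 ∈ Ioo t1 b' := ⟨ht12, by rw [hb']; linarith⟩
  obtain ⟨δ, hδpos, hδ⟩ := Metric.eventually_nhds_iff.mp
    ((hgat t2 ht2Ioo).eventually_ne hgt2ne)
  set ε : ℝ := min (δ / 2) (1 / 2) with hεdef
  have hεpos : 0 < ε := lt_min (by linarith) (by norm_num)
  have hεδ : ε < δ := lt_of_le_of_lt (min_le_left _ _) (by linarith)
  have hεhalf : ε ≤ 1 / 2 := min_le_right _ _
  have hεb' : t2 + ε < b' := by rw [hb']; linarith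
  -- open set where U is invertible
  set O : Set ℝ := Ioo t1 b' ∩ {s | g s ≠ 0} with hOdef
  have hOopen : IsOpen O := by
    rw [isOpen_iff_mem_nhds]
    rintro x ⟨hx1, hx2⟩
    exact Filter.inter_mem (isOpen_Ioo.mem_nhds hx1) ((hgat x hx1).eventually_ne hx2)
  have hmemO : ∀ t : ℝ, t2 ≤ t → t < t2 + ε → t ∈ O := by
    intro t h1 h2
    refine ⟨⟨lt_of_lt_of_le ht12 h1, lt_trans h2 hεb'⟩, ?_⟩
    apply hδ
    rw [Real.dist_eq, abs_of_nonneg (by linarith)]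
    linarith
  have hdetO : ∀ τ ∈ O, (U τ).det ≠ 0 := fun τ hτ => hτ.2
  have hUdO : ∀ τ ∈ O, HasDerivAt U (Ab τ * U τ + Bb τ * V τ) τ := fun τ hτ => hUd τ hτ.1
  -- derivative of V U⁻¹ on [t2, t2+ε)
  have hZfun : ∀ t : ℝ, t2 ≤ t → t < t2 + ε →
      HasDerivAt (fun s => V s * (U s)⁻¹)
        (C t - (A t)ᴴ * (V t * (U t)⁻¹) - (V t * (U t)⁻¹) * A t
          - (V t * (U t)⁻¹) * B t * (V t * (U t)⁻¹)) t := by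
    intro t h1 h2
    have htO := hmemO t h1 h2
    have ht0t : t0 ≤ t := le_trans ht02 h1
    have hinv := hasDerivAt_inv2 hOopen htO hUdO hdetO
    have hmul := (hVd t htO.1).mul hinv
    have hUQ : U t * (U t)⁻¹ = 1 := Matrix.mul_nonsing_inv _ (Ne.isUnit htO.2)
    refine HasDerivAt.congr_deriv hmul ?_
    rw [hAbeq t ht0t, hBbeq t ht0t, hCbeq t ht0t]
    simp only [mul_neg, neg_mul, mul_add, add_mul, mul_sub, sub_mul, mul_assoc]
    rw [hUQ]
    simp only [mul_one]
    abel
  -- assemble the continued solution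
  refine ⟨ε, hεpos, fun t => if t < t2 then Z0 t else V t * (U t)⁻¹,
    fun t => if t < t2 then Z0' t
      else C t - (A t)ᴴ * (V t * (U t)⁻¹) - (V t * (U t)⁻¹) * A t
        - (V t * (U t)⁻¹) * B t * (V t * (U t)⁻¹), ?_, ?_⟩
  · intro t ht
    by_cases hlt : t < t2
    · constructor
      · intro i j
        have hd := (hsol t ⟨ht.1, hlt⟩).1 i j
        simp only [if_pos hlt]
        apply hd.congr_of_eventuallyEq
        filter_upwards [Iio_mem_nhds hlt] with s hs
        have hs' : s < t2 := hs
        simp only [if_pos hs']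
      · simp only [if_pos hlt]
        exact (hsol t ⟨ht.1, hlt⟩).2
    · push_neg at hlt
      have h2 : t < t2 + ε := ht.2
      have hder := hZfun t hlt h2
      have hne : ¬ t < t2 := not_lt.mpr hlt
      constructor
      · simp only [if_neg hne]
        rw [entryDeriv_iff]
        apply hder.congr_of_eventuallyEq
        filter_upwards [Ioo_mem_nhds (lt_of_lt_of_le ht12 hlt) h2] with s hs
        by_cases hst2 : s < t2
        · rw [if_pos hst2, hVZU s ⟨le_of_lt hs.1, hst2⟩, mul_assoc,
            Matrix.mul_nonsing_inv _ (Ne.isUnit (hgne s ⟨le_of_lt hs.1, hst2⟩)), mul_one]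
        · rw [if_neg hst2]
      · simp only [if_neg hne]
        abel
  · intro t ht
    exact if_pos ht.2
end
end

section
/- Let b1(t) > 0 and b2(t) > 0 on [t0, t1) with t0 < t1 < +∞, and let a12(t)/b1(t) and conj(a21(t))/b2(t) be continuously differentiable on [t0, t1). Suppose real-valued functions z11, z22 and complex-valued functions y, v on [t0, t1) satisfy the coupled system: (i) z11' + b1 z11² + 2Re(a11) z11 + b2|y|² − |a21|²/b2 − c11 = 0; (ii) y' + [b1 z11 + b2 z22 + conj(a11) + a22] y + (a12 − (b1/b2)conj(a21)) z11 − (conj(a21)/b2)' − (conj(a21)/b2)(conj(a11) + a22) − c12 = 0; (iii) z22' + b2 z22² + 2Re(a22) z22 + b1|v|² − |a12|²/b1 − c22 = 0; (iv) v' + [b1 z11 + b2 z22 + conj(a11) + a22] v + (conj(a21) − (b2/b1)a12) z22 − (a12/b1)' − (a12/b1)(conj(a11) + a22) − c12 = 0, with z11(t) ≥ 0, z22(t) ≥ 0 on [t0, t1) and y(t0) = v(t0) = 0. Then for all t ∈ [t0, t1): |y(t)| ≤ 𝔐(t) + ∫_{t0}^t |exp{−∫_τ^t (conj(a11(s)) +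 a22(s)) ds} [(conj(a21)/b2)'(τ) + (conj(a21(τ))/b2(τ))(conj(a11(τ)) + a22(τ)) + c12(τ)]| dτ, and |v(t)| ≤ 𝔐(t) + ∫_{t0}^t |exp{−∫_τ^t (conj(a11(s)) + a22(s)) ds} [(a12/b1)'(τ) + (a12(τ)/b1(τ))(conj(a11(τ)) + a22(τ)) + c12(τ)]| dτ. -/
open Matrix MeasureTheory intervalIntegral Set Complex ComplexConjugate

noncomputable section

section Helpers

variable {E : Type*} [NormedAddCommGroup E] [NormedSpace ℝ E]

lemma ii_sub {t0 t : ℝ} {f : ℝ → E} (hf : ContinuousOn f (Set.Icc t0 t))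
    {a b : ℝ} (ha : a ∈ Set.Icc t0 t) (hb : b ∈ Set.Icc t0 t) :
    IntervalIntegrable f volume a b :=
  (hf.mono (Set.uIcc_subset_Icc ha hb)).intervalIntegrable

lemma split_upper {t0 t : ℝ} {f : ℝ → E} (hf : ContinuousOn f (Set.Icc t0 t))
    {τ : ℝ} (hτ : τ ∈ Set.Icc t0 t) :
    (∫ s in τ..t, f s) = (∫ s in t0..t, f s) - ∫ s in t0..τ, f s := by
  have h1 : (∫ s in t0..τ, f s) + (∫ s in τ..t, f s) = ∫ s in t0..t, f s :=
    integral_add_adjacent_intervals (ii_sub hf (Set.left_mem_Icc.2 (hτ.1.trans hτ.2)) hτ)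
      (ii_sub hf hτ (Set.right_mem_Icc.2 (hτ.1.trans hτ.2)))
  exact (eq_sub_of_add_eq' h1)

lemma contOn_upper {t0 t : ℝ} (ht : t0 ≤ t) {f : ℝ → E}
    (hf : ContinuousOn f (Set.Icc t0 t)) :
    ContinuousOn (fun τ => ∫ s in τ..t, f s) (Set.Icc t0 t) := by
  have hint : IntegrableOn f (Set.uIcc t0 t) volume := by
    rw [Set.uIcc_of_le ht]; exact hf.integrableOn_Icc
  have h1 : ContinuousOn (fun x => ∫ s in t0..x, f s) (Set.Icc t0 t) := by
    have := intervalIntegral.continuousOn_primitive_interval hint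
    rwa [Set.uIcc_of_le ht] at this
  refine ContinuousOn.congr ((continuousOn_const (c := ∫ s in t0..t, f s)).sub h1) ?_
  intro τ hτ
  exact split_upper hf hτ

lemma key {t0 t : ℝ} (ht : t0 ≤ t)
    (w q : ℝ → ℝ) (α Δ h y : ℝ → ℂ) (Mt : ℝ)
    (hwc : ContinuousOn w (Set.Icc t0 t))
    (hwa : ∀ τ ∈ Set.Ioo t0 t, ContinuousAt w τ)
    (hqc : ContinuousOn q (Set.Icc t0 t))
    (hαc : ContinuousOn α (Set.Icc t0 t))
    (hαa : ∀ τ ∈ Set.Ioo t0 t, ContinuousAt α τ)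
    (hΔc : ContinuousOn Δ (Set.Icc t0 t))
    (hhc : ContinuousOn h (Set.Icc t0 t))
    (hq0 : ∀ τ ∈ Set.Icc t0 t, 0 ≤ q τ)
    (hqw : ∀ τ ∈ Set.Icc t0 t, q τ ≤ w τ)
    (hyd : ∀ τ ∈ Set.Icc t0 t, HasDerivAt y
      (-(((w τ : ℂ) + α τ) * y τ + ((q τ : ℂ) * Δ τ - h τ))) τ)
    (hy0 : y t0 = 0) (hM0 : 0 ≤ Mt)
    (hMb : ∀ τ ∈ Set.Icc t0 t, ‖Complex.exp (-(∫ s in τ..t, α s)) * Δ τ‖ ≤ Mt) :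
    ‖y t‖ ≤ Mt + ∫ τ in t0..t, ‖Complex.exp (-(∫ s in τ..t, α s)) * h τ‖ := by
  -- basic continuity facts
  set β : ℝ → ℂ := fun τ => (w τ : ℂ) + α τ with hβ
  have hβc : ContinuousOn β (Set.Icc t0 t) :=
    (Complex.continuous_ofReal.comp_continuousOn hwc).add hαc
  have hβa : ∀ τ ∈ Set.Ioo t0 t, ContinuousAt β τ := fun τ hτ =>
    (Complex.continuous_ofReal.continuousAt.comp (hwa τ hτ)).add (hαa τ hτ)
  have hyc : ContinuousOn y (Set.Icc t0 t) := fun τ hτ =>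
    (hyd τ hτ).continuousAt.continuousWithinAt
  set g : ℝ → ℂ := fun τ => (q τ : ℂ) * Δ τ - h τ with hg
  have hgc : ContinuousOn g (Set.Icc t0 t) :=
    ((Complex.continuous_ofReal.comp_continuousOn hqc).mul hΔc).sub hhc
  -- the primitive G of β
  set G : ℝ → ℂ := fun τ => ∫ s in t0..τ, β s with hG
  have hGc : ContinuousOn G (Set.Icc t0 t) := by
    have hint : IntegrableOn β (Set.uIcc t0 t) volume := by
      rw [Set.uIcc_of_le ht]; exact hβc.integrableOn_Icc
    have := intervalIntegral.continuousOn_primitive_interval hint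
    rwa [Set.uIcc_of_le ht] at this
  have hGd : ∀ τ ∈ Set.Ioo t0 t, HasDerivAt G (β τ) τ := by
    intro τ hτ
    exact integral_hasDerivAt_right
      (ii_sub hβc (Set.left_mem_Icc.2 ht) (Set.Ioo_subset_Icc_self hτ))
      (ContinuousAt.stronglyMeasurableAtFilter isOpen_Ioo hβa τ hτ) (hβa τ hτ)
  -- F = exp(G) * y
  set F : ℝ → ℂ := fun τ => Complex.exp (G τ) * y τ with hF
  have hFc : ContinuousOn F (Set.Icc t0 t) :=
    (Complex.continuous_exp.comp_continuousOn hGc).mul hyc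
  have hFd : ∀ τ ∈ Set.Ioo t0 t,
      HasDerivAt F (Complex.exp (G τ) * (-(g τ))) τ := by
    intro τ hτ
    have h1 := ((hGd τ hτ).cexp).mul (hyd τ (Set.Ioo_subset_Icc_self hτ))
    convert h1 using 1
    · rfl
    · rfl
    simp only [hβ, hg]
    ring
  have hφc : ContinuousOn (fun τ => Complex.exp (G τ) * (-(g τ))) (Set.Icc t0 t) :=
    (Complex.continuous_exp.comp_continuousOn hGc).mul hgc.neg
  have hFTC : (∫ τ in t0..t, Complex.exp (G τ) * (-(g τ))) = F t - F t0 :=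
    integral_eq_sub_of_hasDeriv_right_of_le ht hFc
      (fun x hx => (hFd x hx).hasDerivWithinAt)
      (ii_sub hφc (Set.left_mem_Icc.2 ht) (Set.right_mem_Icc.2 ht))
  have hrepr : y t = ∫ τ in t0..t,
      Complex.exp (-(∫ s in τ..t, β s)) * (-(g τ)) := by
    have hFt0 : F t0 = 0 := by simp [hF, hy0]
    have hyt : y t = Complex.exp (-(G t)) * ∫ τ in t0..t,
        Complex.exp (G τ) * (-(g τ)) := by
      rw [hFTC, hFt0, sub_zero, hF]
      rw [← mul_assoc, ← Complex.exp_add, neg_add_cancel, Complex.exp_zero, one_mul]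
    rw [hyt, ← intervalIntegral.integral_const_mul]
    refine intervalIntegral.integral_congr ?_
    intro τ hτ
    rw [Set.uIcc_of_le ht] at hτ
    have hsplit := split_upper hβc hτ
    show Complex.exp (-(∫ s in t0..t, β s)) * (Complex.exp (∫ s in t0..τ, β s) * (-(g τ)))
      = Complex.exp (-(∫ s in τ..t, β s)) * (-(g τ))
    rw [hsplit, ← mul_assoc, ← Complex.exp_add]
    congr 2
    ring
  -- splitting the exponential
  have hwcC : ContinuousOn (fun s => ((w s : ℝ) : ℂ)) (Set.Icc t0 t) :=
    Complex.continuous_ofReal.comp_continuousOn hwc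
  have htmem : t ∈ Set.Icc t0 t := Set.right_mem_Icc.2 ht
  have hsplitβ : ∀ τ ∈ Set.Icc t0 t, (∫ s in τ..t, β s)
      = (((∫ s in τ..t, w s : ℝ)) : ℂ) + ∫ s in τ..t, α s := by
    intro τ hτ
    rw [hβ, intervalIntegral.integral_add (ii_sub hwcC hτ htmem) (ii_sub hαc hτ htmem)]
    congr 1
    exact intervalIntegral.integral_ofReal
  have hw0 : ∀ τ ∈ Set.Icc t0 t, 0 ≤ w τ := fun τ hτ => (hq0 τ hτ).trans (hqw τ hτ)
  have hIw0 : ∀ τ ∈ Set.Icc t0 t, 0 ≤ ∫ s in τ..t, w s := by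
    intro τ hτ
    refine intervalIntegral.integral_nonneg hτ.2 ?_
    intro s hs
    exact hw0 s ⟨hτ.1.trans hs.1, hs.2⟩
  have hnorm : ∀ τ ∈ Set.Icc t0 t, ∀ c : ℂ,
      ‖Complex.exp (-(∫ s in τ..t, β s)) * c‖
      = Real.exp (-(∫ s in τ..t, w s)) * ‖Complex.exp (-(∫ s in τ..t, α s)) * c‖ := by
    intro τ hτ c
    rw [hsplitβ τ hτ, neg_add, Complex.exp_add, mul_assoc, norm_mul]
    congr 1
    rw [← Complex.ofReal_neg]
    simp [Complex.norm_exp]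
  -- pointwise estimate
  have hone : ∀ τ ∈ Set.Icc t0 t, Real.exp (-(∫ s in τ..t, w s)) ≤ 1 := by
    intro τ hτ
    rw [← Real.exp_zero]
    exact Real.exp_le_exp.2 (by linarith [hIw0 τ hτ])
  have hpt : ∀ τ ∈ Set.Icc t0 t,
      ‖Complex.exp (-(∫ s in τ..t, β s)) * (-(g τ))‖
      ≤ q τ * Real.exp (-(∫ s in τ..t, w s)) * Mt
        + ‖Complex.exp (-(∫ s in τ..t, α s)) * h τ‖ := by
    intro τ hτ
    have hng : -(g τ) = h τ - (q τ : ℂ) * Δ τ := by rw [hg]; ring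
    rw [hng, mul_sub]
    refine (norm_sub_le _ _).trans ?_
    rw [hnorm τ hτ (h τ), hnorm τ hτ ((q τ : ℂ) * Δ τ)]
    have h1 : ‖Complex.exp (-(∫ s in τ..t, α s)) * ((q τ : ℂ) * Δ τ)‖
        = q τ * ‖Complex.exp (-(∫ s in τ..t, α s)) * Δ τ‖ := by
      rw [show Complex.exp (-(∫ s in τ..t, α s)) * ((q τ : ℂ) * Δ τ)
        = (q τ : ℂ) * (Complex.exp (-(∫ s in τ..t, α s)) * Δ τ) by ring, norm_mul,
        Complex.norm_real, Real.norm_eq_abs, _root_.abs_of_nonneg (hq0 τ hτ)]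
    have h2 := hMb τ hτ
    have h3 := hone τ hτ
    have h4 : (0:ℝ) ≤ Real.exp (-(∫ s in τ..t, w s)) := (Real.exp_pos _).le
    have h5 : (0:ℝ) ≤ ‖Complex.exp (-(∫ s in τ..t, α s)) * h τ‖ := norm_nonneg _
    have h6 := hq0 τ hτ
    rw [h1]
    nlinarith [mul_le_mul_of_nonneg_left h2 (mul_nonneg h4 h6)]
  -- continuity of auxiliary integrands
  have hEβc : ContinuousOn (fun τ => Complex.exp (-(∫ s in τ..t, β s)) * (-(g τ))) (Set.Icc t0 t) :=
    (Complex.continuous_exp.comp_continuousOn (contOn_upper ht hβc).neg).mul hgc.neg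
  have hec : ContinuousOn (fun τ => Real.exp (-(∫ s in τ..t, w s))) (Set.Icc t0 t) :=
    Real.continuous_exp.comp_continuousOn (contOn_upper ht hwc).neg
  have hEαhc : ContinuousOn (fun τ => ‖Complex.exp (-(∫ s in τ..t, α s)) * h τ‖) (Set.Icc t0 t) :=
    ((Complex.continuous_exp.comp_continuousOn (contOn_upper ht hαc).neg).mul hhc).norm
  have hrhs_c : ContinuousOn (fun τ => q τ * Real.exp (-(∫ s in τ..t, w s)) * Mt
      + ‖Complex.exp (-(∫ s in τ..t, α s)) * h τ‖) (Set.Icc t0 t) :=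
    ((hqc.mul hec).mul continuousOn_const).add hEαhc
  have hstep1 : ‖y t‖ ≤ ∫ τ in t0..t, (q τ * Real.exp (-(∫ s in τ..t, w s)) * Mt
      + ‖Complex.exp (-(∫ s in τ..t, α s)) * h τ‖) := by
    rw [hrepr]
    refine (intervalIntegral.norm_integral_le_integral_norm ht).trans ?_
    refine intervalIntegral.integral_mono_on ht ?_ ?_ hpt
    · exact (ii_sub hEβc.norm (Set.left_mem_Icc.2 ht) htmem)
    · exact (ii_sub hrhs_c (Set.left_mem_Icc.2 ht) htmem)
  have hsum : (∫ τ in t0..t, (q τ * Real.exp (-(∫ s in τ..t, w s)) * Mt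
      + ‖Complex.exp (-(∫ s in τ..t, α s)) * h τ‖))
      = (∫ τ in t0..t, q τ * Real.exp (-(∫ s in τ..t, w s)) * Mt)
      + ∫ τ in t0..t, ‖Complex.exp (-(∫ s in τ..t, α s)) * h τ‖ :=
    intervalIntegral.integral_add
      (ii_sub ((hqc.mul hec).mul continuousOn_const) (Set.left_mem_Icc.2 ht) htmem)
      (ii_sub hEαhc (Set.left_mem_Icc.2 ht) htmem)
  have hψd : ∀ τ ∈ Set.Ioo t0 t, HasDerivAt (fun u => Real.exp (-(∫ s in u..t, w s)))
      (w τ * Real.exp (-(∫ s in τ..t, w s))) τ := by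
    intro τ hτ
    have hin : HasDerivAt (fun u => ∫ s in u..t, w s) (-(w τ)) τ :=
      intervalIntegral.integral_hasDerivAt_left
        (ii_sub hwc (Set.Ioo_subset_Icc_self hτ) htmem)
        (ContinuousAt.stronglyMeasurableAtFilter isOpen_Ioo hwa τ hτ) (hwa τ hτ)
    have h2 := (hin.neg).exp
    convert h2 using 1
    · rfl
    rw [neg_neg]
    exact mul_comm _ _
  have hFTC2 : (∫ τ in t0..t, w τ * Real.exp (-(∫ s in τ..t, w s)))
      = 1 - Real.exp (-(∫ s in t0..t, w s)) := by
    have h3 := integral_eq_sub_of_hasDeriv_right_of_le ht hec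
      (fun x hx => (hψd x hx).hasDerivWithinAt)
      (ii_sub (hwc.mul hec) (Set.left_mem_Icc.2 ht) htmem)
    rw [h3]
    simp
  have hmono2 : (∫ τ in t0..t, q τ * Real.exp (-(∫ s in τ..t, w s)) * Mt) ≤ Mt := by
    have h1 : (∫ τ in t0..t, q τ * Real.exp (-(∫ s in τ..t, w s)) * Mt)
        = Mt * ∫ τ in t0..t, q τ * Real.exp (-(∫ s in τ..t, w s)) := by
      rw [← intervalIntegral.integral_const_mul]
      congr 1; funext τ; ring
    rw [h1]
    have h2 : (∫ τ in t0..t, q τ * Real.exp (-(∫ s in τ..t, w s)))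
        ≤ ∫ τ in t0..t, w τ * Real.exp (-(∫ s in τ..t, w s)) := by
      refine intervalIntegral.integral_mono_on ht
        (ii_sub (hqc.mul hec) (Set.left_mem_Icc.2 ht) htmem)
        (ii_sub (hwc.mul hec) (Set.left_mem_Icc.2 ht) htmem) ?_
      intro τ hτ
      exact mul_le_mul_of_nonneg_right (hqw τ hτ) (Real.exp_pos _).le
    have h3 : (∫ τ in t0..t, w τ * Real.exp (-(∫ s in τ..t, w s))) ≤ 1 := by
      rw [hFTC2]; nlinarith [Real.exp_pos (-(∫ s in t0..t, w s))]
    calc Mt * (∫ τ in t0..t, q τ * Real.exp (-(∫ s in τ..t, w s)))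
        ≤ Mt * 1 := mul_le_mul_of_nonneg_left (h2.trans h3) hM0
      _ = Mt := mul_one Mt
  rw [hsum] at hstep1
  linarith


end Helpers

theorem lemma_2_2
    (t0 t1 : ℝ) (A C : ℝ → Mat2) (b1 b2 : ℝ → ℝ)
    (hA : ∀ i j, ContinuousOn (fun t => A t i j) (Set.Ici t0))
    (hC : ∀ i j, ContinuousOn (fun t => C t i j) (Set.Ici t0))
    (hb1 : ContinuousOn b1 (Set.Ici t0)) (hb2 : ContinuousOn b2 (Set.Ici t0))
    (hCherm : ∀ t, t0 ≤ t → (C t)ᴴ = C t)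
    (ht01 : t0 < t1)
    (hbpos : ∀ t ∈ Set.Ico t0 t1, 0 < b1 t ∧ 0 < b2 t)
    -- a12/b1 and conj(a21)/b2 are continuously differentiable on [t0, t1),
    -- with derivatives d12 and d21 respectively:
    (d12 d21 : ℝ → ℂ)
    (hd12 : ∀ t ∈ Set.Ico t0 t1,
      HasDerivAt (fun s => A s 0 1 / (b1 s : ℂ)) (d12 t) t)
    (hd21 : ∀ t ∈ Set.Ico t0 t1,
      HasDerivAt (fun s => conj (A s 1 0) / (b2 s : ℂ)) (d21 t) t)
    (hd12c : ContinuousOn d12 (Set.Ico t0 t1))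
    (hd21c : ContinuousOn d21 (Set.Ico t0 t1))
    -- (z11, y) solves subsystem (2.8):
    (z11 z22 : ℝ → ℝ) (y v : ℝ → ℂ)
    (hz11 : ∀ t ∈ Set.Ico t0 t1, HasDerivAt z11
      (-(b1 t * (z11 t) ^ 2 + 2 * (A t 0 0).re * z11 t + b2 t * ‖y t‖ ^ 2
        - ‖A t 1 0‖ ^ 2 / b2 t - (C t 0 0).re)) t)
    (hy : ∀ t ∈ Set.Ico t0 t1, HasDerivAt y
      (-((((b1 t * z11 t + b2 t * z22 t : ℝ) : ℂ) + conj (A t 0 0) + A t 1 1) * y t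
        + (A t 0 1 - ((b1 t / b2 t : ℝ) : ℂ) * conj (A t 1 0)) * ((z11 t : ℝ) : ℂ)
        - d21 t - (conj (A t 1 0) / (b2 t : ℂ)) * (conj (A t 0 0) + A t 1 1)
        - C t 0 1)) t)
    -- (z22, v) solves subsystem (2.11):
    (hz22 : ∀ t ∈ Set.Ico t0 t1, HasDerivAt z22
      (-(b2 t * (z22 t) ^ 2 + 2 * (A t 1 1).re * z22 t + b1 t * ‖v t‖ ^ 2
        - ‖A t 0 1‖ ^ 2 / b1 t - (C t 1 1).re)) t)
    (hv : ∀ t ∈ Set.Ico t0 t1, HasDerivAt v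
      (-((((b1 t * z11 t + b2 t * z22 t : ℝ) : ℂ) + conj (A t 0 0) + A t 1 1) * v t
        + (conj (A t 1 0) - ((b2 t / b1 t : ℝ) : ℂ) * A t 0 1) * ((z22 t : ℝ) : ℂ)
        - d12 t - (A t 0 1 / (b1 t : ℂ)) * (conj (A t 0 0) + A t 1 1)
        - C t 0 1)) t)
    (hznonneg : ∀ t ∈ Set.Ico t0 t1, 0 ≤ z11 t ∧ 0 ≤ z22 t)
    (hy0 : y t0 = 0) (hv0 : v t0 = 0)
    -- the majorant 𝔐(t):
    (M : ℝ → ℝ)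
    (hM : ∀ t, M t = sSup ((fun τ =>
      ‖Complex.exp (-(∫ s in τ..t, (conj (A s 0 0) + A s 1 1))) *
        (A τ 0 1 / (b1 τ : ℂ) - conj (A τ 1 0) / (b2 τ : ℂ))‖) '' Set.Icc t0 t)) :
    ∀ t ∈ Set.Ico t0 t1,
      ‖y t‖ ≤ M t + (∫ τ in t0..t,
        ‖Complex.exp (-(∫ s in τ..t, (conj (A s 0 0) + A s 1 1))) *
          (d21 τ + (conj (A τ 1 0) / (b2 τ : ℂ)) * (conj (A τ 0 0) + A τ 1 1)
            + C τ 0 1)‖) ∧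
      ‖v t‖ ≤ M t + (∫ τ in t0..t,
        ‖Complex.exp (-(∫ s in τ..t, (conj (A s 0 0) + A s 1 1))) *
          (d12 τ + (A τ 0 1 / (b1 τ : ℂ)) * (conj (A τ 0 0) + A τ 1 1)
            + C τ 0 1)‖) := by
  intro t htm
  obtain ⟨ht0, ht1⟩ := htm
  have hsub : Set.Icc t0 t ⊆ Set.Ico t0 t1 := fun s hs => ⟨hs.1, lt_of_le_of_lt hs.2 ht1⟩
  have hsubI : Set.Icc t0 t ⊆ Set.Ici t0 := fun s hs => hs.1
  have hnhds : ∀ τ ∈ Set.Ioo t0 t, Set.Ici t0 ∈ nhds τ := fun τ hτ => Ici_mem_nhds hτ.1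
  have hnhds2 : ∀ τ ∈ Set.Ioo t0 t, Set.Ico t0 t1 ∈ nhds τ :=
    fun τ hτ => Ico_mem_nhds hτ.1 (lt_trans hτ.2 ht1)
  -- α
  set α : ℝ → ℂ := fun s => conj (A s 0 0) + A s 1 1 with hα
  have hαc : ContinuousOn α (Set.Icc t0 t) :=
    ((continuous_conj.comp_continuousOn ((hA 0 0).mono hsubI))).add ((hA 1 1).mono hsubI)
  have hαa : ∀ τ ∈ Set.Ioo t0 t, ContinuousAt α τ := by
    intro τ hτ
    exact (continuous_conj.continuousAt.comp ((hA 0 0).continuousAt (hnhds τ hτ))).add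
      ((hA 1 1).continuousAt (hnhds τ hτ))
  -- w
  set w : ℝ → ℝ := fun τ => b1 τ * z11 τ + b2 τ * z22 τ with hw
  have hz11c : ContinuousOn z11 (Set.Icc t0 t) := fun τ hτ =>
    ((hz11 τ (hsub hτ)).continuousAt).continuousWithinAt
  have hz22c : ContinuousOn z22 (Set.Icc t0 t) := fun τ hτ =>
    ((hz22 τ (hsub hτ)).continuousAt).continuousWithinAt
  have hwc : ContinuousOn w (Set.Icc t0 t) :=
    ((hb1.mono hsubI).mul hz11c).add ((hb2.mono hsubI).mul hz22c)
  have hwa : ∀ τ ∈ Set.Ioo t0 t, ContinuousAt w τ := by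
    intro τ hτ
    exact ((hb1.continuousAt (hnhds τ hτ)).mul (hz11 τ (hsub (Set.Ioo_subset_Icc_self hτ))).continuousAt).add
      ((hb2.continuousAt (hnhds τ hτ)).mul (hz22 τ (hsub (Set.Ioo_subset_Icc_self hτ))).continuousAt)
  -- Δ and its continuity
  set Δ : ℝ → ℂ := fun τ => A τ 0 1 / (b1 τ : ℂ) - conj (A τ 1 0) / (b2 τ : ℂ) with hΔ
  have hΔc : ContinuousOn Δ (Set.Icc t0 t) := fun τ hτ =>
    (((hd12 τ (hsub hτ)).continuousAt).sub ((hd21 τ (hsub hτ)).continuousAt)).continuousWithinAt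
  have h12c : ContinuousOn (fun τ => A τ 0 1 / (b1 τ : ℂ)) (Set.Icc t0 t) := fun τ hτ =>
    ((hd12 τ (hsub hτ)).continuousAt).continuousWithinAt
  have h21c : ContinuousOn (fun τ => conj (A τ 1 0) / (b2 τ : ℂ)) (Set.Icc t0 t) := fun τ hτ =>
    ((hd21 τ (hsub hτ)).continuousAt).continuousWithinAt
  -- the majorant
  have htmem : t ∈ Set.Icc t0 t := Set.right_mem_Icc.2 ht0
  have hfc : ContinuousOn (fun τ =>
      ‖Complex.exp (-(∫ s in τ..t, α s)) * Δ τ‖) (Set.Icc t0 t) :=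
    ((Complex.continuous_exp.comp_continuousOn (contOn_upper ht0 hαc).neg).mul hΔc).norm
  have hbdd : BddAbove ((fun τ =>
      ‖Complex.exp (-(∫ s in τ..t, α s)) * Δ τ‖) '' Set.Icc t0 t) :=
    (isCompact_Icc.image_of_continuousOn hfc).bddAbove
  have hMb : ∀ τ ∈ Set.Icc t0 t, ‖Complex.exp (-(∫ s in τ..t, α s)) * Δ τ‖ ≤ M t := by
    intro τ hτ
    rw [hM t]
    exact le_csSup hbdd ⟨τ, hτ, rfl⟩
  have hM0 : 0 ≤ M t := (norm_nonneg _).trans (hMb t0 (Set.left_mem_Icc.2 ht0))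
  -- nonnegativity of b z products
  have hq1 : ∀ τ ∈ Set.Icc t0 t, 0 ≤ b1 τ * z11 τ := fun τ hτ =>
    mul_nonneg (hbpos τ (hsub hτ)).1.le (hznonneg τ (hsub hτ)).1
  have hq2 : ∀ τ ∈ Set.Icc t0 t, 0 ≤ b2 τ * z22 τ := fun τ hτ =>
    mul_nonneg (hbpos τ (hsub hτ)).2.le (hznonneg τ (hsub hτ)).2
  constructor
  · -- bound for y
    refine key ht0 w (fun τ => b1 τ * z11 τ) α Δ
      (fun τ => d21 τ + (conj (A τ 1 0) / (b2 τ : ℂ)) * (conj (A τ 0 0) + A τ 1 1) + C τ 0 1)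
      y (M t) hwc hwa ((hb1.mono hsubI).mul hz11c) hαc hαa hΔc
      ?_ hq1 (fun τ hτ => le_add_of_nonneg_right (hq2 τ hτ)) ?_ hy0 hM0 hMb
    · exact ((hd21c.mono hsub).add (h21c.mul hαc)).add ((hC 0 1).mono hsubI)
    · intro τ hτ
      have hde := hy τ (hsub hτ)
      have hb1' : (b1 τ : ℂ) ≠ 0 := Complex.ofReal_ne_zero.2 (hbpos τ (hsub hτ)).1.ne'
      have hb2' : (b2 τ : ℂ) ≠ 0 := Complex.ofReal_ne_zero.2 (hbpos τ (hsub hτ)).2.ne'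
      convert hde using 1
      simp only [hw, hα, hΔ]
      push_cast
      field_simp
      ring
  · -- bound for v
    refine key ht0 w (fun τ => b2 τ * z22 τ) α
      (fun τ => conj (A τ 1 0) / (b2 τ : ℂ) - A τ 0 1 / (b1 τ : ℂ))
      (fun τ => d12 τ + (A τ 0 1 / (b1 τ : ℂ)) * (conj (A τ 0 0) + A τ 1 1) + C τ 0 1)
      v (M t) hwc hwa ((hb2.mono hsubI).mul hz22c) hαc hαa
      (fun τ hτ => (((hd21 τ (hsub hτ)).continuousAt).sub
        ((hd12 τ (hsub hτ)).continuousAt)).continuousWithinAt)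
      ?_ hq2 (fun τ hτ => le_add_of_nonneg_left (hq1 τ hτ)) ?_ hv0 hM0 ?_
    · exact ((hd12c.mono hsub).add (h12c.mul hαc)).add ((hC 0 1).mono hsubI)
    · intro τ hτ
      have hde := hv τ (hsub hτ)
      have hb1' : (b1 τ : ℂ) ≠ 0 := Complex.ofReal_ne_zero.2 (hbpos τ (hsub hτ)).1.ne'
      have hb2' : (b2 τ : ℂ) ≠ 0 := Complex.ofReal_ne_zero.2 (hbpos τ (hsub hτ)).2.ne'
      convert hde using 1
      simp only [hw, hα]
      push_cast
      field_simp
      ring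
    · intro τ hτ
      beta_reduce
      rw [show (conj (A τ 1 0) / (b2 τ : ℂ) - A τ 0 1 / (b1 τ : ℂ))
        = -(A τ 0 1 / (b1 τ : ℂ) - conj (A τ 1 0) / (b2 τ : ℂ)) by ring, mul_neg, norm_neg]
      exact hMb τ hτ
end
end

section
/- Assume B(t) is positive semidefinite for all t ≥ t0, its Hermitian nonnegative square root √B(t) is continuously differentiable on [t0, ∞), and F(t) is a continuous 2×2 matrix function on [t0, ∞) satisfying equation (3.21): √B(t) F(t) [A(t)√B(t) − (√B)'(t)] = A(t)√B(t) − (√B)'(t) for all t ≥ t0. Set P(t) = F(t)[A(t)√B(t) − (√B)'(t)] and Q(t) = √B(t) C(t) √B(t). If Z is a solution of the matrix Riccati equation Z' + Z B(t) Z + A*(t) Z + Z A(t) − C(t) = 0 on an interval I ⊆ [t0, ∞), then V(t) = √B(t) Z(t) √B(t) is a solution on I of the matrix Riccati equation V' + V² + P*(t) V + V P(t) − Q(t) = 0. -/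
open Matrix Set Complex ComplexConjugate ComplexOrder

noncomputable section

/-! With `S = √B` self-adjoint and `S P = A S - S'`, sandwiching the Riccati equation for `Z`
between two copies of `S` and applying the product rule to `V = S Z S` yields the Riccati
equation for `V`: the terms `S' Z S` and `S Z S'` produced by differentiating `S` are exactly
cancelled by the `-S'` parts of `P* S = S A* - S'` and `S P = A S - S'`. -/

theorem riccati_sandwich_eq_zero {R : Type*} [Ring R] [StarRing R] {A B C P S S' Z Z' : R}
    (hS : IsSelfAdjoint S) (hS' : IsSelfAdjoint S') (hB : S * S = B)
    (hSP : S * P = A * S - S') (hZ : Z' + Z * B * Z + star A * Z + Z * A - C = 0) :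
    ((S' * Z + S * Z') * S + S * Z * S') + (S * Z * S) * (S * Z * S)
      + star P * (S * Z * S) + (S * Z * S) * P - S * C * S = 0 := by
  have hPS : star P * S = S * star A - S' := by
    simpa [star_mul, star_sub, hS.star_eq, hS'.star_eq] using congrArg star hSP
  calc ((S' * Z + S * Z') * S + S * Z * S') + (S * Z * S) * (S * Z * S)
        + star P * (S * Z * S) + (S * Z * S) * P - S * C * S
      = ((S' * Z + S * Z') * S + S * Z * S') + (S * Z * S) * (S * Z * S)
        + (star P * S) * (Z * S) + (S * Z) * (S * P) - S * C * S := by noncomm_ring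
    _ = S * (Z' + Z * (S * S) * Z + star A * Z + Z * A - C) * S := by
        rw [hPS, hSP]; noncomm_ring
    _ = 0 := by rw [hB, hZ, mul_zero, zero_mul]

theorem EntryDeriv.mul {X Y : ℝ → Mat2} {X' Y' : Mat2} {t : ℝ}
    (hX : EntryDeriv X X' t) (hY : EntryDeriv Y Y' t) :
    EntryDeriv (fun s => X s * Y s) (X' * Y t + X t * Y') t := by
  intro i j
  simp only [Matrix.mul_apply, Matrix.add_apply, ← Finset.sum_add_distrib]
  exact HasDerivAt.fun_sum fun k _ => (hX i k).mul (hY k j)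

theorem EntryDeriv.isHermitian {S : ℝ → Mat2} {S' : Mat2} {s : Set ℝ} {t : ℝ}
    (hs : UniqueDiffWithinAt ℝ s t) (ht : t ∈ s) (hS : ∀ x ∈ s, (S x).IsHermitian)
    (hS' : EntryDeriv S S' t) : S'.IsHermitian := by
  ext i j
  have hstar : HasDerivWithinAt (fun x => S x i j) (star (S' j i)) s t :=
    (hS' j i).star.hasDerivWithinAt.congr (fun x hx => ((hS x hx).apply i j).symm)
      ((hS t ht).apply i j).symm
  exact hs.eq_deriv _ hstar (hS' i j).hasDerivWithinAt

theorem riccati_transform_general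
    (t0 : ℝ) (A B C S S' F : ℝ → Mat2)
    -- S = √B, the Hermitian nonnegative square root, continuously differentiable:
    (hS : ∀ t, t0 ≤ t → (S t).PosSemidef ∧ S t * S t = B t)
    (hS' : ∀ t, t0 ≤ t → EntryDeriv S (S' t) t)
    -- F is a continuous solution of equation (3.21):
    (hF : ∀ t, t0 ≤ t → S t * F t * (A t * S t - S' t) = A t * S t - S' t)
    (P Q : ℝ → Mat2)
    (hP : ∀ t, P t = F t * (A t * S t - S' t))
    (hQ : ∀ t, Q t = S t * C t * S t)
    (I : Set ℝ) (hI : I ⊆ Set.Ici t0)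
    (Z Z' : ℝ → Mat2)
    (hZsol : ∀ t ∈ I, EntryDeriv Z (Z' t) t ∧
      Z' t + Z t * B t * Z t + (A t)ᴴ * Z t + Z t * A t - C t = 0) :
    ∃ V' : ℝ → Mat2,
      ∀ t ∈ I, EntryDeriv (fun s => S s * Z s * S s) (V' t) t ∧
        V' t + (S t * Z t * S t) * (S t * Z t * S t)
          + (P t)ᴴ * (S t * Z t * S t) + (S t * Z t * S t) * P t - Q t = 0 := by
  refine ⟨fun t => (S' t * Z t + S t * Z' t) * S t + S t * Z t * S' t, fun t ht => ?_⟩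
  have ht0 : t0 ≤ t := hI ht
  obtain ⟨hZd, hZeq⟩ := hZsol t ht
  have hS'herm : (S' t).IsHermitian :=
    (hS' t ht0).isHermitian (uniqueDiffOn_Ici t0 t ht0) ht0
      fun x hx => (hS x hx).1.isHermitian
  have hSP : S t * P t = A t * S t - S' t := by rw [hP, ← mul_assoc, hF t ht0]
  refine ⟨((hS' t ht0).mul hZd).mul (hS' t ht0), ?_⟩
  rw [hQ]
  exact riccati_sandwich_eq_zero (hS t ht0).1.isHermitian hS'herm (hS t ht0).2 hSP hZeq

theorem riccati_transform
    (t0 : ℝ) (A B C S S' F : ℝ → Mat2)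
    (hA : ∀ i j, ContinuousOn (fun t => A t i j) (Set.Ici t0))
    (hBc : ∀ i j, ContinuousOn (fun t => B t i j) (Set.Ici t0))
    (hCc : ∀ i j, ContinuousOn (fun t => C t i j) (Set.Ici t0))
    (hCherm : ∀ t, t0 ≤ t → (C t)ᴴ = C t)
    (hBpsd : ∀ t, t0 ≤ t → (B t).PosSemidef)
    -- S = √B, the Hermitian nonnegative square root, continuously differentiable:
    (hS : ∀ t, t0 ≤ t → (S t).PosSemidef ∧ S t * S t = B t)
    (hS' : ∀ t, t0 ≤ t → EntryDeriv S (S' t) t)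
    (hS'c : ∀ i j, ContinuousOn (fun t => S' t i j) (Set.Ici t0))
    -- F is a continuous solution of equation (3.21):
    (hFc : ∀ i j, ContinuousOn (fun t => F t i j) (Set.Ici t0))
    (hF : ∀ t, t0 ≤ t → S t * F t * (A t * S t - S' t) = A t * S t - S' t)
    (P Q : ℝ → Mat2)
    (hP : ∀ t, P t = F t * (A t * S t - S' t))
    (hQ : ∀ t, Q t = S t * C t * S t)
    (I : Set ℝ) (hI : I ⊆ Set.Ici t0)
    (Z Z' : ℝ → Mat2)
    (hZsol : ∀ t ∈ I, EntryDeriv Z (Z' t) t ∧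
      Z' t + Z t * B t * Z t + (A t)ᴴ * Z t + Z t * A t - C t = 0) :
    ∃ V' : ℝ → Mat2,
      ∀ t ∈ I, EntryDeriv (fun s => S s * Z s * S s) (V' t) t ∧
        V' t + (S t * Z t * S t) * (S t * Z t * S t)
          + (P t)ᴴ * (S t * Z t * S t) + (S t * Z t * S t) * P t - Q t = 0 :=
  riccati_transform_general t0 A B C S S' F hS hS' hF P Q hP hQ I hI Z Z' hZsol
end
end

section
/- Assume B(t) = [[1, 1], [1, 1]] for all t ≥ t0 and a11(t) + a12(t) = a21(t) + a22(t) = 0 for all t ≥ t0. If the scalar second-order equation φ1'' − [c11(t) + 2Re(c12(t)) + c22(t)]φ1 = 0 is oscillatory, then the Hamiltonian system (1.1) is oscillatory. -/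
open Matrix Set Complex ComplexConjugate

noncomputable section

def IsConjoined (t0 : ℝ) (A B C Φ Ψ : ℝ → Mat2) : Prop :=
  (∀ t, t0 ≤ t → EntryDeriv Φ (A t * Φ t + B t * Ψ t) t) ∧
  (∀ t, t0 ≤ t → EntryDeriv Ψ (C t * Φ t - (A t)ᴴ * Ψ t) t) ∧
  (∀ t, t0 ≤ t → (Φ t)ᴴ * Ψ t = (Ψ t)ᴴ * Φ t)

def SysOsc (t0 : ℝ) (A B C : ℝ → Mat2) : Prop :=
  ∀ Φ Ψ : ℝ → Mat2, IsConjoined t0 A B C Φ Ψ →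
    ∀ T : ℝ, ∃ t, T ≤ t ∧ (Φ t).det = 0

/-- The scalar equation φ'' + p φ' + q φ = 0 on [t0, ∞) is oscillatory. -/
def SecondOrderOsc (t0 : ℝ) (p q : ℝ → ℝ) : Prop :=
  ∀ φ dφ : ℝ → ℝ,
    (∀ t, t0 ≤ t → HasDerivAt φ (dφ t) t) →
    (∀ t, t0 ≤ t → HasDerivAt dφ (-(p t * dφ t + q t * φ t)) t) →
    (∃ t, t0 ≤ t ∧ φ t ≠ 0) →
    ∀ T : ℝ, ∃ t, T ≤ t ∧ φ t = 0

lemma gronwall_zero {E : Type*} [NormedAddCommGroup E] [NormedSpace ℝ E]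
    {f f' : ℝ → E} {a b K : ℝ}
    (hf : ∀ t ∈ Set.Icc a b, HasDerivAt f (f' t) t)
    (hbound : ∀ t ∈ Set.Icc a b, ‖f' t‖ ≤ K * ‖f t‖)
    (h0 : f a = 0) : ∀ t ∈ Set.Icc a b, f t = 0 := by
  intro t ht
  have h := norm_le_gronwallBound_of_norm_deriv_right_le (δ := 0) (ε := 0) (K := K)
    (f := f) (f' := f') (a := a) (b := b)
    (fun s hs => (hf s hs).continuousAt.continuousWithinAt)
    (fun s hs => (hf s ⟨hs.1, hs.2.le⟩).hasDerivWithinAt)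
    (by simp [h0])
    (fun s hs => by simpa using hbound s ⟨hs.1, hs.2.le⟩)
  have h2 := h t ht
  rw [gronwallBound_ε0_δ0] at h2
  exact norm_le_zero_iff.mp h2

lemma hasDerivAt_re {f : ℝ → ℂ} {g : ℂ} {t : ℝ} (h : HasDerivAt f g t) :
    HasDerivAt (fun s => (f s).re) g.re t := by
  exact (Complex.reCLM.hasFDerivAt.comp_hasDerivAt t h)

lemma hasDerivAt_im {f : ℝ → ℂ} {g : ℂ} {t : ℝ} (h : HasDerivAt f g t) :
    HasDerivAt (fun s => (f s).im) g.im t := by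
  exact (Complex.imCLM.hasFDerivAt.comp_hasDerivAt t h)

theorem example_3_2_oscillatory
    (t0 : ℝ) (A B C : ℝ → Mat2)
    (hA : ∀ i j, ContinuousOn (fun t => A t i j) (Set.Ici t0))
    (hC : ∀ i j, ContinuousOn (fun t => C t i j) (Set.Ici t0))
    (hCherm : ∀ t, t0 ≤ t → (C t)ᴴ = C t)
    (hB : ∀ t, t0 ≤ t → B t = !![1, 1; 1, 1])
    (ha1 : ∀ t, t0 ≤ t → A t 0 0 + A t 0 1 = 0)
    (ha2 : ∀ t, t0 ≤ t → A t 1 0 + A t 1 1 = 0)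
    (hosc : SecondOrderOsc t0 (fun _ => 0)
      (fun t => -((C t 0 0).re + 2 * (C t 0 1).re + (C t 1 1).re))) :
    SysOsc t0 A B C := by
  intro Φ Ψ hconj T
  obtain ⟨hΦ', hΨ', hco⟩ := hconj
  -- choose the constant vector c
  obtain ⟨c, hc0, hcd⟩ : ∃ c : Fin 2 → ℂ, c ≠ 0 ∧
      (Φ t0 0 0 - Φ t0 1 0) * c 0 + (Φ t0 0 1 - Φ t0 1 1) * c 1 = 0 := by
    by_cases h : Φ t0 0 0 - Φ t0 1 0 = 0 ∧ Φ t0 0 1 - Φ t0 1 1 = 0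
    · refine ⟨![1, 0], ?_, by rw [h.1, h.2]; simp⟩
      intro hc; have := congrFun hc 0; simp at this
    · refine ⟨![Φ t0 0 1 - Φ t0 1 1, -(Φ t0 0 0 - Φ t0 1 0)], ?_,
        by simp [Matrix.cons_val_zero, Matrix.cons_val_one]; ring⟩
      intro hc
      apply h
      constructor
      · have h2 := congrFun hc 1
        simp only [Matrix.cons_val_one, Matrix.head_cons, Pi.zero_apply] at h2
        exact neg_eq_zero.mp h2
      · have h2 := congrFun hc 0
        simp only [Matrix.cons_val_zero, Pi.zero_apply] at h2
        exact h2
  set φ0 : ℝ → ℂ := fun s => Φ s 0 0 * c 0 + Φ s 0 1 * c 1 with hφ0_def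
  set φ1 : ℝ → ℂ := fun s => Φ s 1 0 * c 0 + Φ s 1 1 * c 1 with hφ1_def
  set ψ0 : ℝ → ℂ := fun s => Ψ s 0 0 * c 0 + Ψ s 0 1 * c 1 with hψ0_def
  set ψ1 : ℝ → ℂ := fun s => Ψ s 1 0 * c 0 + Ψ s 1 1 * c 1 with hψ1_def
  set y : ℝ → ℂ := fun s => ψ0 s + ψ1 s with hy_def
  -- φ₀'
  have hD0 : ∀ t, t0 ≤ t → HasDerivAt φ0 (A t 0 0 * (φ0 t - φ1 t) + y t) t := by
    intro t ht
    have h := ((hΦ' t ht 0 0).mul_const (c 0)).add ((hΦ' t ht 0 1).mul_const (c 1))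
    have hval : (A t * Φ t + B t * Ψ t) 0 0 * c 0 + (A t * Φ t + B t * Ψ t) 0 1 * c 1
        = A t 0 0 * (φ0 t - φ1 t) + y t := by
      simp only [Matrix.add_apply, Matrix.mul_apply, Fin.sum_univ_two, hB t ht,
        hφ0_def, hφ1_def, hψ0_def, hψ1_def, hy_def, Matrix.cons_val', Matrix.cons_val_zero,
        Matrix.cons_val_one, Matrix.head_cons, Matrix.empty_val', Matrix.cons_val_fin_one,
        Matrix.of_apply, Matrix.head_fin_const]
      linear_combination (Φ t 1 0 * c 0 + Φ t 1 1 * c 1) * ha1 t ht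
    exact hval ▸ h
  -- φ₁'
  have hD1 : ∀ t, t0 ≤ t → HasDerivAt φ1 (A t 1 0 * (φ0 t - φ1 t) + y t) t := by
    intro t ht
    have h := ((hΦ' t ht 1 0).mul_const (c 0)).add ((hΦ' t ht 1 1).mul_const (c 1))
    have hval : (A t * Φ t + B t * Ψ t) 1 0 * c 0 + (A t * Φ t + B t * Ψ t) 1 1 * c 1
        = A t 1 0 * (φ0 t - φ1 t) + y t := by
      simp only [Matrix.add_apply, Matrix.mul_apply, Fin.sum_univ_two, hB t ht,
        hφ0_def, hφ1_def, hψ0_def, hψ1_def, hy_def, Matrix.cons_val', Matrix.cons_val_zero,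
        Matrix.cons_val_one, Matrix.head_cons, Matrix.empty_val', Matrix.cons_val_fin_one,
        Matrix.of_apply, Matrix.head_fin_const]
      linear_combination (Φ t 1 0 * c 0 + Φ t 1 1 * c 1) * ha2 t ht
    exact hval ▸ h
  -- ψ₀', ψ₁'
  have hE0 : ∀ t, t0 ≤ t → HasDerivAt ψ0
      ((C t 0 0 * φ0 t + C t 0 1 * φ1 t)
        - (conj (A t 0 0) * ψ0 t + conj (A t 1 0) * ψ1 t)) t := by
    intro t ht
    have h := ((hΨ' t ht 0 0).mul_const (c 0)).add ((hΨ' t ht 0 1).mul_const (c 1))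
    have hval : (C t * Φ t - (A t)ᴴ * Ψ t) 0 0 * c 0 + (C t * Φ t - (A t)ᴴ * Ψ t) 0 1 * c 1
        = (C t 0 0 * φ0 t + C t 0 1 * φ1 t)
          - (conj (A t 0 0) * ψ0 t + conj (A t 1 0) * ψ1 t) := by
      simp only [Matrix.sub_apply, Matrix.mul_apply, Matrix.conjTranspose_apply,
        Fin.sum_univ_two, hφ0_def, hφ1_def, hψ0_def, hψ1_def, starRingEnd_apply]
      ring
    exact hval ▸ h
  have hE1 : ∀ t, t0 ≤ t → HasDerivAt ψ1
      ((C t 1 0 * φ0 t + C t 1 1 * φ1 t)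
        - (conj (A t 0 1) * ψ0 t + conj (A t 1 1) * ψ1 t)) t := by
    intro t ht
    have h := ((hΨ' t ht 1 0).mul_const (c 0)).add ((hΨ' t ht 1 1).mul_const (c 1))
    have hval : (C t * Φ t - (A t)ᴴ * Ψ t) 1 0 * c 0 + (C t * Φ t - (A t)ᴴ * Ψ t) 1 1 * c 1
        = (C t 1 0 * φ0 t + C t 1 1 * φ1 t)
          - (conj (A t 0 1) * ψ0 t + conj (A t 1 1) * ψ1 t) := by
      simp only [Matrix.sub_apply, Matrix.mul_apply, Matrix.conjTranspose_apply,
        Fin.sum_univ_two, hφ0_def, hφ1_def, hψ0_def, hψ1_def, starRingEnd_apply]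
      ring
    exact hval ▸ h
  -- d = φ0 - φ1 satisfies a linear ODE and vanishes at t0, hence vanishes
  have hd' : ∀ t, t0 ≤ t → HasDerivAt (fun s => φ0 s - φ1 s)
      ((A t 0 0 - A t 1 0) * (φ0 t - φ1 t)) t := by
    intro t ht
    have h := (hD0 t ht).sub (hD1 t ht)
    exact h.congr_deriv (by ring)
  have hd0 : φ0 t0 - φ1 t0 = 0 := by
    simp only [hφ0_def, hφ1_def]
    linear_combination hcd
  have hdzero : ∀ t, t0 ≤ t → φ0 t - φ1 t = 0 := by
    intro t ht
    obtain ⟨K, hK⟩ := isCompact_Icc.exists_bound_of_continuousOn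
      (s := Set.Icc t0 t) (((hA 0 0).sub (hA 1 0)).mono Set.Icc_subset_Ici_self)
    exact gronwall_zero (f := fun s => φ0 s - φ1 s)
      (f' := fun s => (A s 0 0 - A s 1 0) * (φ0 s - φ1 s))
      (fun s hs => hd' s hs.1)
      (fun s hs => by
        rw [norm_mul]
        exact mul_le_mul_of_nonneg_right (hK s hs) (norm_nonneg _))
      hd0 t ⟨ht, le_rfl⟩
  -- x = φ0 satisfies x' = y
  have hx' : ∀ t, t0 ≤ t → HasDerivAt φ0 (y t) t := by
    intro t ht
    have h := hD0 t ht
    have hz := hdzero t ht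
    have : A t 0 0 * (φ0 t - φ1 t) + y t = y t := by rw [hz]; ring
    exact this ▸ h
  -- real coefficient r
  have hrt : ∀ t, t0 ≤ t → (((C t 0 0).re + 2 * (C t 0 1).re + (C t 1 1).re : ℝ) : ℂ)
      = C t 0 0 + C t 0 1 + C t 1 0 + C t 1 1 := by
    intro t ht
    have h00 : conj (C t 0 0) = C t 0 0 := by
      have := congrFun (congrFun (hCherm t ht) 0) 0
      simpa [Matrix.conjTranspose_apply] using this
    have h11 : conj (C t 1 1) = C t 1 1 := by
      have := congrFun (congrFun (hCherm t ht) 1) 1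
      simpa [Matrix.conjTranspose_apply] using this
    have h10 : conj (C t 0 1) = C t 1 0 := by
      have := congrFun (congrFun (hCherm t ht) 1) 0
      simpa [Matrix.conjTranspose_apply] using this
    have e00 : C t 0 0 = ((C t 0 0).re : ℂ) := (Complex.conj_eq_iff_re.mp h00).symm
    have e11 : C t 1 1 = ((C t 1 1).re : ℂ) := (Complex.conj_eq_iff_re.mp h11).symm
    have e01 : C t 0 1 + C t 1 0 = ((2 * (C t 0 1).re : ℝ) : ℂ) := by
      rw [← h10, Complex.add_conj]
    push_cast
    push_cast at e01
    linear_combination -e00 - e01 - e11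
  -- y' = r x
  have hy' : ∀ t, t0 ≤ t → HasDerivAt y
      ((((C t 0 0).re + 2 * (C t 0 1).re + (C t 1 1).re : ℝ) : ℂ) * φ0 t) t := by
    intro t ht
    have h := (hE0 t ht).add (hE1 t ht)
    have hz := hdzero t ht
    have hca1 : conj (A t 0 0) + conj (A t 0 1) = 0 := by
      rw [← map_add, ha1 t ht, map_zero]
    have hca2 : conj (A t 1 0) + conj (A t 1 1) = 0 := by
      rw [← map_add, ha2 t ht, map_zero]
    have hval : ((C t 0 0 * φ0 t + C t 0 1 * φ1 t)
          - (conj (A t 0 0) * ψ0 t + conj (A t 1 0) * ψ1 t))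
        + ((C t 1 0 * φ0 t + C t 1 1 * φ1 t)
          - (conj (A t 0 1) * ψ0 t + conj (A t 1 1) * ψ1 t))
        = (((C t 0 0).re + 2 * (C t 0 1).re + (C t 1 1).re : ℝ) : ℂ) * φ0 t := by
      rw [hrt t ht]
      linear_combination (-(C t 0 1 + C t 1 1)) * hz + (-(ψ0 t)) * hca1 + (-(ψ1 t)) * hca2
    exact hval ▸ h
  -- conjoinedness: conj x * y = conj y * x
  have hkey : ∀ t, t0 ≤ t → conj (φ0 t) * y t = conj (y t) * φ0 t := by
    intro t ht
    have h := hco t ht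
    have h00 := congrFun (congrFun h 0) 0
    have h01 := congrFun (congrFun h 0) 1
    have h10 := congrFun (congrFun h 1) 0
    have h11 := congrFun (congrFun h 1) 1
    simp only [Matrix.mul_apply, Matrix.conjTranspose_apply, Fin.sum_univ_two,
      ← starRingEnd_apply] at h00 h01 h10 h11
    have hphi : φ0 t - φ1 t = 0 := hdzero t ht
    have hphic : conj (φ0 t) - conj (φ1 t) = 0 := by rw [← map_sub, hphi, map_zero]
    simp only [hφ0_def, hφ1_def, hψ0_def, hψ1_def, hy_def, map_add, _root_.map_mul]
      at hphi hphic ⊢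
    linear_combination conj (c 0) * c 0 * h00 + conj (c 0) * c 1 * h01
      + conj (c 1) * c 0 * h10 + conj (c 1) * c 1 * h11
      + (Ψ t 1 0 * c 0 + Ψ t 1 1 * c 1) * hphic
      - (conj (Ψ t 1 0) * conj (c 0) + conj (Ψ t 1 1) * conj (c 1)) * hphi
  -- imaginary-part identity: u dw = w du
  have him : ∀ t, t0 ≤ t → (φ0 t).re * (y t).im = (φ0 t).im * (y t).re := by
    intro t ht
    have h := congrArg Complex.im (hkey t ht)
    simp only [Complex.mul_im, Complex.conj_re, Complex.conj_im] at h
    linarith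
  -- real and imaginary parts as solutions of the scalar equation
  set u : ℝ → ℝ := fun s => (φ0 s).re with hu_def
  set w : ℝ → ℝ := fun s => (φ0 s).im with hw_def
  set du : ℝ → ℝ := fun s => (y s).re with hdu_def
  set dw : ℝ → ℝ := fun s => (y s).im with hdw_def
  have hu' : ∀ t, t0 ≤ t → HasDerivAt u (du t) t := fun t ht => hasDerivAt_re (hx' t ht)
  have hw' : ∀ t, t0 ≤ t → HasDerivAt w (dw t) t := fun t ht => hasDerivAt_im (hx' t ht)
  have hdu' : ∀ t, t0 ≤ t → HasDerivAt du
      (((C t 0 0).re + 2 * (C t 0 1).re + (C t 1 1).re) * u t) t := by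
    intro t ht
    have h := hasDerivAt_re (hy' t ht)
    simpa [Complex.mul_re] using h
  have hdw' : ∀ t, t0 ≤ t → HasDerivAt dw
      (((C t 0 0).re + 2 * (C t 0 1).re + (C t 1 1).re) * w t) t := by
    intro t ht
    have h := hasDerivAt_im (hy' t ht)
    simpa [Complex.mul_im] using h
  have hdu2 : ∀ t, t0 ≤ t → HasDerivAt du
      (-((0:ℝ) * du t + -((C t 0 0).re + 2 * (C t 0 1).re + (C t 1 1).re) * u t)) t := by
    intro t ht
    have h := hdu' t ht
    convert h using 1
    ring
  have hdw2 : ∀ t, t0 ≤ t → HasDerivAt dw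
      (-((0:ℝ) * dw t + -((C t 0 0).re + 2 * (C t 0 1).re + (C t 1 1).re) * w t)) t := by
    intro t ht
    have h := hdw' t ht
    convert h using 1
    ring
  -- determinant vanishes where x does
  have hdet : ∀ t, t0 ≤ t → φ0 t = 0 → (Φ t).det = 0 := by
    intro t ht h0
    rw [← Matrix.exists_mulVec_eq_zero_iff]
    refine ⟨c, hc0, ?_⟩
    have h1 : φ1 t = 0 := by
      have := hdzero t ht
      linear_combination h0 - this
    funext i
    fin_cases i
    · simp only [Matrix.mulVec, dotProduct, Fin.sum_univ_two, Pi.zero_apply]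
      simp only [hφ0_def] at h0
      exact h0
    · simp only [Matrix.mulVec, dotProduct, Fin.sum_univ_two, Pi.zero_apply]
      simp only [hφ1_def] at h1
      exact h1
  -- main argument
  set T' : ℝ := max T t0 with hT'_def
  have hT't0 : t0 ≤ T' := le_max_right _ _
  have hTT' : T ≤ T' := le_max_left _ _
  by_cases hxT : φ0 T' = 0
  · exact ⟨T', hTT', hdet T' hT't0 hxT⟩
  -- z = α u - β w with α = Im x(T'), β = Re x(T')
  set α : ℝ := (φ0 T').im with hα_def
  set β : ℝ := (φ0 T').re with hβ_def
  set z : ℝ → ℝ := fun s => α * u s - β * w s with hz_def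
  set dz : ℝ → ℝ := fun s => α * du s - β * dw s with hdz_def
  have hz' : ∀ t, t0 ≤ t → HasDerivAt z (dz t) t := fun t ht =>
    ((hu' t ht).const_mul α).sub ((hw' t ht).const_mul β)
  have hdz' : ∀ t, t0 ≤ t → HasDerivAt dz
      (((C t 0 0).re + 2 * (C t 0 1).re + (C t 1 1).re) * z t) t := by
    intro t ht
    have h := ((hdu' t ht).const_mul α).sub ((hdw' t ht).const_mul β)
    exact h.congr_deriv (by simp only [hz_def]; ring)
  have hzT : z T' = 0 := by
    simp only [hz_def, hu_def, hw_def, hα_def, hβ_def]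
    ring
  have hdzT : dz T' = 0 := by
    have h := him T' hT't0
    simp only [hdz_def, hdu_def, hdw_def, hα_def, hβ_def]
    linarith
  -- z ≡ 0 on [T', ∞) by Gronwall on the pair (z, dz)
  have hzzero : ∀ s, T' ≤ s → z s = 0 := by
    intro s hsT
    have hrc : ContinuousOn (fun τ => (C τ 0 0).re + 2 * (C τ 0 1).re + (C τ 1 1).re)
        (Set.Icc T' s) := by
      refine ContinuousOn.mono ?_
        (Set.Icc_subset_Ici_self.trans (Set.Ici_subset_Ici.mpr hT't0))
      exact ((Complex.continuous_re.comp_continuousOn (hC 0 0)).add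
        (continuousOn_const.mul (Complex.continuous_re.comp_continuousOn (hC 0 1)))).add
        (Complex.continuous_re.comp_continuousOn (hC 1 1))
    obtain ⟨Mb, hMb⟩ := isCompact_Icc.exists_bound_of_continuousOn hrc
    set K : ℝ := max 1 Mb with hK_def
    have hK1 : (1:ℝ) ≤ K := le_max_left _ _
    have hK0 : (0:ℝ) ≤ K := le_trans zero_le_one hK1
    have hpair := gronwall_zero (E := ℝ × ℝ)
      (f := fun τ => (z τ, dz τ))
      (f' := fun τ => (dz τ, ((C τ 0 0).re + 2 * (C τ 0 1).re + (C τ 1 1).re) * z τ))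
      (a := T') (b := s) (K := K)
      (fun τ hτ => (hz' τ (hT't0.trans hτ.1)).prodMk (hdz' τ (hT't0.trans hτ.1)))
      (fun τ hτ => by
        rw [Prod.norm_def, Prod.norm_def]
        apply max_le
        · calc ‖dz τ‖ ≤ max ‖z τ‖ ‖dz τ‖ := le_max_right _ _
            _ ≤ K * max ‖z τ‖ ‖dz τ‖ := le_mul_of_one_le_left (le_trans (norm_nonneg _) (le_max_left _ _)) hK1
        · calc ‖((C τ 0 0).re + 2 * (C τ 0 1).re + (C τ 1 1).re) * z τ‖
              = ‖(C τ 0 0).re + 2 * (C τ 0 1).re + (C τ 1 1).re‖ * ‖z τ‖ := norm_mul _ _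
            _ ≤ K * ‖z τ‖ := mul_le_mul_of_nonneg_right
                ((hMb τ hτ).trans (le_max_right 1 Mb)) (norm_nonneg _)
            _ ≤ K * max ‖z τ‖ ‖dz τ‖ := mul_le_mul_of_nonneg_left (le_max_left _ _) hK0)
      (by simp [Prod.ext_iff, hzT, hdzT])
    have := hpair s ⟨hsT, le_rfl⟩
    exact congrArg Prod.fst this
  -- now use oscillation
  by_cases hβ0 : β ≠ 0
  · obtain ⟨t, htT', hut⟩ := hosc u du hu' hdu2 ⟨T', hT't0, hβ0⟩ T'
    have ht0 : t0 ≤ t := hT't0.trans htT'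
    have hwz : w t = 0 := by
      have hz := hzzero t htT'
      simp only [hz_def] at hz
      rw [hut] at hz
      have : β * w t = 0 := by linarith
      rcases mul_eq_zero.mp this with h | h
      · exact absurd h hβ0
      · exact h
    have hx0 : φ0 t = 0 := by
      apply Complex.ext
      · exact hut
      · exact hwz
    exact ⟨t, hTT'.trans htT', hdet t ht0 hx0⟩
  · push_neg at hβ0
    have hα0 : α ≠ 0 := by
      intro hα
      apply hxT
      apply Complex.ext
      · exact hβ0
      · exact hα
    obtain ⟨t, htT', hwt⟩ := hosc w dw hw' hdw2 ⟨T', hT't0, hα0⟩ T'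
    have ht0 : t0 ≤ t := hT't0.trans htT'
    have huz : u t = 0 := by
      have hz := hzzero t htT'
      simp only [hz_def] at hz
      rw [hwt] at hz
      have : α * u t = 0 := by linarith
      rcases mul_eq_zero.mp this with h | h
      · exact absurd h hα0
      · exact h
    have hx0 : φ0 t = 0 := by
      apply Complex.ext
      · exact huz
      · exact hwt
    exact ⟨t, hTT'.trans htT', hdet t ht0 hx0⟩
end
end
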